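/- arXiv:2212.11643 — 11 statements merged into one kernel-verified Lean document; each statement's English description precedes it below -/
import Mathlib

section
/- Let M be an n×n matrix with integer entries and let λ be an even integer. Then the dimension over ℝ of the kernel of M − λI (with M viewed over ℝ; for symmetric M this is the multiplicity of λ as an eigenvalue of M) is less than or equal to the 2-nullity of the mod-2 reduction M̄ of M. -/
open Matrix Module Submodule

/-- Integer vectors whose mod-2 reductions are linearly independent over `ZMod 2`
are linearly independent over `ℝ`. -/
lemma li_real_of_li_mod2 {ι n : Type*} [Fintype ι] [DecidableEq ι] [Fintype n]
    (V : Matrix ι n ℤ)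
    (h2 : LinearIndependent (ZMod 2) (fun i j => ((V i j : ZMod 2)))) :
    LinearIndependent ℝ (fun i j => ((V i j : ℝ))) := by
  classical
  set G : Matrix ι ι ℤ := V * Vᵀ with hGdef
  -- Step 1: the integer Gram determinant is nonzero.
  have hG : G.det ≠ 0 := by
    intro h0
    -- pass to ℚ
    have h0q : ((G.map (Int.cast : ℤ → ℚ)).det) = 0 := by
      rw [show G.map (Int.cast : ℤ → ℚ) = (Int.castRingHom ℚ).mapMatrix G from rfl,
        ← RingHom.map_det]
      simp [h0]
    obtain ⟨c, hc0, hc⟩ := (Matrix.exists_vecMul_eq_zero_iff).mpr h0q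
    set Vq : Matrix ι n ℚ := V.map (Int.cast : ℤ → ℚ) with hVq
    have hGq : G.map (Int.cast : ℤ → ℚ) = Vq * Vqᵀ := by
      ext i k
      simp only [hGdef, hVq, Matrix.map_apply, Matrix.mul_apply, Matrix.transpose_apply]
      push_cast
      rfl
    -- the rational vector c annihilates Vq
    set w : n → ℚ := c ᵥ* Vq with hw
    have h1 : w ᵥ* Vqᵀ = 0 := by
      rw [hw, Matrix.vecMul_vecMul, ← hGq, hc]
    have hww : w ⬝ᵥ w = 0 := by
      have : (w ᵥ* Vqᵀ) ⬝ᵥ c = 0 := by rw [h1]; simp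
      rwa [← Matrix.dotProduct_mulVec, Matrix.mulVec_transpose, ← hw] at this
    have hw0 : w = 0 := by
      exact (dotProduct_self_eq_zero).mp hww
    -- clear denominators
    set d : ι → ℤ := fun i =>
      (c i).num * ∏ j ∈ Finset.univ.erase i, ((c j).den : ℤ) with hd
    set b : ℤ := ∏ i, ((c i).den : ℤ) with hb
    have hdc : ∀ i, (d i : ℚ) = (b : ℚ) * c i := by
      intro i
      have hbi : b = ((c i).den : ℤ) * ∏ j ∈ Finset.univ.erase i, ((c j).den : ℤ) :=
        (Finset.mul_prod_erase _ _ (Finset.mem_univ i)).symm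
      have hden : ((c i).den : ℚ) ≠ 0 := by
        exact_mod_cast (c i).den_nz
      have hnum : ((c i).num : ℚ) = c i * ((c i).den : ℚ) := by
        have hx := Rat.num_div_den (c i)
        rwa [div_eq_iff hden] at hx
      rw [hd]
      push_cast
      rw [hnum, hbi]
      push_cast
      ring
    have hdV : ∀ j, (∑ i, d i * V i j) = 0 := by
      intro j
      have hwj : ∑ i, c i * (V i j : ℚ) = 0 := by
        have := congrFun hw0 j
        simpa [hw, Matrix.vecMul, dotProduct, hVq, Matrix.map_apply] using this
      have : ((∑ i, d i * V i j : ℤ) : ℚ) = 0 := by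
        push_cast
        simp_rw [hdc, mul_assoc]
        rw [← Finset.mul_sum, hwj, mul_zero]
      exact_mod_cast this
    have hd0 : ∃ i, d i ≠ 0 := by
      obtain ⟨i, hi⟩ : ∃ i, c i ≠ 0 := by
        by_contra h
        push_neg at h
        exact hc0 (funext h)
      refine ⟨i, mul_ne_zero (Rat.num_ne_zero.mpr hi) ?_⟩
      exact Finset.prod_ne_zero_iff.mpr fun j _ => by positivity
    -- divide by the gcd to get a coefficient vector with an odd entry
    set g : ℤ := Finset.univ.gcd d with hgdef
    have hg0 : g ≠ 0 := by
      obtain ⟨i, hi⟩ := hd0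
      intro h
      exact hi (Finset.gcd_eq_zero_iff.mp h i (Finset.mem_univ i))
    set e : ι → ℤ := fun i => d i / g with he
    have hde : ∀ i, d i = g * e i := fun i =>
      (Int.mul_ediv_cancel' (Finset.gcd_dvd (Finset.mem_univ i))).symm
    have heV : ∀ j, (∑ i, e i * V i j) = 0 := by
      intro j
      have : g * (∑ i, e i * V i j) = 0 := by
        rw [Finset.mul_sum]
        simp_rw [← mul_assoc, ← hde]
        exact hdV j
      rcases mul_eq_zero.mp this with h | h
      · exact absurd h hg0
      · exact h
    have hodd : ∃ i, ¬ (2 ∣ e i) := by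
      by_contra h
      push_neg at h
      have h2g : (2 * g) ∣ g := by
        apply Finset.dvd_gcd
        intro i _
        obtain ⟨k, hk⟩ := h i
        exact ⟨k, by rw [hde i, hk]; ring⟩
      obtain ⟨t, ht⟩ := h2g
      have : g * 1 = g * (2 * t) := by linear_combination ht
      have := mul_left_cancel₀ hg0 this
      omega
    obtain ⟨i0, hi0⟩ := hodd
    rw [Fintype.linearIndependent_iff] at h2
    have hrel : ∑ i, ((e i : ZMod 2)) • (fun j => ((V i j : ZMod 2))) = 0 := by
      funext j
      have : ((∑ i, e i * V i j : ℤ) : ZMod 2) = 0 := by rw [heV j]; simp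
      push_cast at this
      simpa [Finset.sum_apply] using this
    have := h2 (fun i => ((e i : ZMod 2))) hrel i0
    rw [ZMod.intCast_zmod_eq_zero_iff_dvd] at this
    exact hi0 (by exact_mod_cast this)
  -- Step 2: nonzero Gram determinant over ℝ gives independence.
  rw [Fintype.linearIndependent_iff]
  intro c hc i
  by_contra hci
  set Vr : Matrix ι n ℝ := V.map (Int.cast : ℤ → ℝ) with hVr
  have hcv : c ᵥ* Vr = 0 := by
    funext j
    have := congrFun hc j
    simpa [Matrix.vecMul, dotProduct, hVr, Matrix.map_apply,
      Finset.sum_apply] using this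
  have hGr : G.map (Int.cast : ℤ → ℝ) = Vr * Vrᵀ := by
    ext i k
    simp only [hGdef, hVr, Matrix.map_apply, Matrix.mul_apply, Matrix.transpose_apply]
    push_cast
    rfl
  have hgram : c ᵥ* (G.map (Int.cast : ℤ → ℝ)) = 0 := by
    rw [hGr, ← Matrix.vecMul_vecMul, hcv, Matrix.zero_vecMul]
  have hdet : (G.map (Int.cast : ℤ → ℝ)).det ≠ 0 := by
    rw [show G.map (Int.cast : ℤ → ℝ) = (Int.castRingHom ℝ).mapMatrix G from rfl,
      ← RingHom.map_det]
    simpa using hG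
  exact hdet (Matrix.exists_vecMul_eq_zero_iff.mp
    ⟨c, fun h => hci (by rw [h]; rfl), hgram⟩)

/-- Rank comparison: the mod-2 rank is at most the real rank. -/
lemma rank_mod2_le_rank_real {n : Type*} [Fintype n] [DecidableEq n]
    (N : Matrix n n ℤ) :
    (N.map (fun x => (x : ZMod 2))).rank ≤ (N.map (fun x => (x : ℝ))).rank := by
  classical
  set B : Matrix n n (ZMod 2) := N.map (fun x => (x : ZMod 2)) with hB
  obtain ⟨t, hts, hspan, hli⟩ := exists_linearIndependent (ZMod 2) (Set.range Bᵀ)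
  have htfin : t.Finite := (Set.finite_range Bᵀ).subset hts
  haveI : Fintype t := htfin.fintype
  -- pick column indices realizing the elements of t
  have hmem : ∀ x : t, (x : n → ZMod 2) ∈ Set.range Bᵀ := fun x => hts x.2
  choose gc hgc using hmem
  -- integer rows
  set W : Matrix t n ℤ := fun x j => N j (gc x) with hW
  have hW2 : (fun (x : t) (j : n) => ((W x j : ZMod 2))) = fun x : t => (x : n → ZMod 2) := by
    funext x j
    have := congrFun (hgc x) j
    simpa [hW, hB, Matrix.transpose_apply, Matrix.map_apply] using this
  have hliW : LinearIndependent (ZMod 2) (fun (x : t) (j : n) => ((W x j : ZMod 2))) := by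
    rw [hW2]
    exact hli
  have hliR := li_real_of_li_mod2 W hliW
  -- the mod-2 rank equals the cardinality of t
  have h1 : B.rank = Fintype.card t := by
    have hc := finrank_span_eq_card hli
    rw [Subtype.range_coe] at hc
    rw [Matrix.rank_eq_finrank_span_cols, Matrix.col_def, ← hspan, hc]
  -- the real rank is at least the cardinality of t
  have h2 : Fintype.card t ≤ (N.map (fun x => (x : ℝ))).rank := by
    rw [Matrix.rank_eq_finrank_span_cols]
    rw [← finrank_span_eq_card hliR]
    apply Submodule.finrank_mono
    apply Submodule.span_mono
    rintro _ ⟨x, rfl⟩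
    exact ⟨gc x, by funext j; simp [hW, Matrix.transpose_apply, Matrix.map_apply]⟩
  omega

/-- For a square integer matrix `M` and an even integer `λ`, the dimension
over `ℝ` of the kernel of `M - λ•I` (the multiplicity of `λ` when `M` is symmetric) is at most
the 2-nullity of the mod-2 reduction of `M`. -/
theorem mult_even_le_two_nullity {n : Type*} [Fintype n] [DecidableEq n]
    (M : Matrix n n ℤ) (lam : ℤ) (hlam : Even lam) :
    Module.finrank ℝ
        (LinearMap.ker ((M.map (fun x => (x : ℝ))) - (lam : ℝ) • (1 : Matrix n n ℝ)).mulVecLin)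
      ≤ Module.finrank (ZMod 2)
          (LinearMap.ker (M.map (fun x => (x : ZMod 2))).mulVecLin) := by
  classical
  set N : Matrix n n ℤ := M - lam • 1 with hN
  have hmapR : (M.map (fun x => (x : ℝ))) - (lam : ℝ) • (1 : Matrix n n ℝ)
      = N.map (fun x => (x : ℝ)) := by
    ext i j
    simp only [hN, Matrix.map_apply, Matrix.sub_apply, Matrix.smul_apply, Matrix.one_apply,
      smul_eq_mul]
    split <;> push_cast <;> ring
  have hlam2 : ((lam : ZMod 2)) = 0 := by
    rw [ZMod.intCast_zmod_eq_zero_iff_dvd]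
    exact_mod_cast hlam.two_dvd
  have hmap2 : M.map (fun x => (x : ZMod 2)) = N.map (fun x => (x : ZMod 2)) := by
    ext i j
    simp only [hN, Matrix.map_apply, Matrix.sub_apply, Matrix.smul_apply, Matrix.one_apply,
      smul_eq_mul]
    push_cast
    rw [hlam2]
    ring
  rw [hmapR, hmap2]
  have hR := LinearMap.finrank_range_add_finrank_ker (N.map (fun x => (x : ℝ))).mulVecLin
  have h2 := LinearMap.finrank_range_add_finrank_ker (N.map (fun x => (x : ZMod 2))).mulVecLin
  rw [Module.finrank_pi] at hR h2
  have key := rank_mod2_le_rank_real N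
  unfold Matrix.rank at key
  omega
end

section
/- Let M be an n×n matrix with integer entries and let λ be an odd integer. Then the dimension over ℝ of the kernel of M − λI (with M viewed over ℝ; for symmetric M this is the multiplicity of λ as an eigenvalue of M) is less than or equal to the 2-nullity of M̄ + I, where M̄ is the mod-2 reduction of M and I is the identity matrix over 𝔽₂. -/
open Module Matrix

/-- From any family whose span has finrank `r`, we can extract `r` linearly
independent members. -/
lemma extract_indep {K V m : Type*} [Field K] [AddCommGroup V] [Module K V]
    [Fintype m] (w : m → V) {r : ℕ}
    (h : Module.finrank K (Submodule.span K (Set.range w)) = r) :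
    ∃ g : Fin r → m, LinearIndependent K (w ∘ g) := by
  obtain ⟨s, hs_sub, hs_span, hs_ind⟩ := exists_linearIndependent K (Set.range w)
  have hfin : s.Finite := (Set.finite_range w).subset hs_sub
  have := hfin.fintype
  have hcard : Fintype.card s = r := by
    have h1 : Submodule.span K (Set.range ((↑) : s → V)) = Submodule.span K s := by
      rw [Subtype.range_coe]
    have h2 := finrank_span_eq_card (R := K) hs_ind
    rw [Subtype.range_coe] at h2
    rw [hs_span, h] at h2
    exact h2.symm
  obtain e := (Fintype.equivFinOfCardEq hcard).symm
  choose g hg using fun x : s => hs_sub x.2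
  refine ⟨fun i => g (e i), ?_⟩
  have : w ∘ (fun i => g (e i)) = ((↑) : s → V) ∘ e := by
    funext i; simp [Function.comp, hg (e i)]
  rw [this]
  exact hs_ind.comp e e.injective

/-- The rank of the mod-2 reduction of an integer matrix is at most its real rank. -/
lemma rank_mod_two_le {n : Type*} [Fintype n] [DecidableEq n] (A : Matrix n n ℤ) :
    (A.map (fun x => (x : ZMod 2))).rank ≤ (A.map (fun x => (x : ℝ))).rank := by
  set A₂ := A.map (fun x => (x : ZMod 2)) with hA₂
  set AR := A.map (fun x => (x : ℝ)) with hAR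
  set r := A₂.rank with hr
  -- extract r independent rows of A₂
  obtain ⟨f, hf⟩ := extract_indep (K := ZMod 2) (fun i => A₂ i)
    (h := (A₂.rank_eq_finrank_span_row).symm)
  -- the submatrix on those rows has rank r, so extract r independent columns
  have hBrows : LinearIndependent (ZMod 2) (fun i => (A₂.submatrix f id) i) := by
    have : (fun i => (A₂.submatrix f id) i) = (fun i => A₂ i) ∘ f := rfl
    rw [this]; exact hf
  have hBrank : (A₂.submatrix f id).rank = r := by
    have := hBrows.rank_matrix
    simp at this; exact this
  obtain ⟨g, hg⟩ := extract_indep (K := ZMod 2) (fun j => (A₂.submatrix f id)ᵀ j)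
    (h := by rw [show (fun j => (A₂.submatrix f id)ᵀ j) = (A₂.submatrix f id).col from rfl, ← Matrix.rank_eq_finrank_span_cols, hBrank])
  -- the square submatrix is invertible mod 2, hence has odd determinant
  have hunit : IsUnit (A₂.submatrix f g) := by
    rw [← Matrix.linearIndependent_cols_iff_isUnit]
    have : (fun i => (A₂.submatrix f g)ᵀ i)
        = (fun j => (A₂.submatrix f id)ᵀ j) ∘ g := rfl
    exact hg
  have hdet2 : ((A.submatrix f g).det : ZMod 2) ≠ 0 := by
    have h1 : ((A.submatrix f g).det : ZMod 2) = (A₂.submatrix f g).det := by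
      have : A₂.submatrix f g = (Int.castRingHom (ZMod 2)).mapMatrix (A.submatrix f g) := by
        ext i j; simp [hA₂, Matrix.map_apply]
      rw [this, ← RingHom.map_det]; rfl
    rw [h1]
    exact ((Matrix.isUnit_iff_isUnit_det _).mp hunit).ne_zero
  have hdetZ : (A.submatrix f g).det ≠ 0 := by
    intro h; apply hdet2; rw [h]; simp
  -- so the corresponding real submatrix is invertible
  have hunitR : IsUnit (AR.submatrix f g) := by
    rw [Matrix.isUnit_iff_isUnit_det]
    have h1 : (AR.submatrix f g).det = ((A.submatrix f g).det : ℝ) := by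
      have : AR.submatrix f g = (Int.castRingHom ℝ).mapMatrix (A.submatrix f g) := by
        ext i j; simp [hAR, Matrix.map_apply]
      rw [this, ← RingHom.map_det]; rfl
    rw [h1, isUnit_iff_ne_zero]
    exact_mod_cast hdetZ
  -- hence the corresponding real rows are linearly independent
  have hrowsR : LinearIndependent ℝ ((fun i => AR i) ∘ f) := by
    have hsq : LinearIndependent ℝ (fun i => (AR.submatrix f g) i) :=
      Matrix.linearIndependent_rows_iff_isUnit.mpr hunitR
    refine LinearIndependent.of_comp (LinearMap.funLeft ℝ ℝ g) ?_
    exact hsq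
  -- conclude
  rw [AR.rank_eq_finrank_span_row]
  have h1 : Module.finrank ℝ (Submodule.span ℝ (Set.range ((fun i => AR i) ∘ f))) = r := by
    have := finrank_span_eq_card (R := ℝ) hrowsR
    simpa using this
  calc r = Module.finrank ℝ (Submodule.span ℝ (Set.range ((fun i => AR i) ∘ f))) := h1.symm
    _ ≤ Module.finrank ℝ (Submodule.span ℝ (Set.range (fun i => AR i))) := by
        apply Submodule.finrank_mono
        apply Submodule.span_mono
        rw [Set.range_comp]
        exact Set.image_subset_range _ _

/-- For a square integer matrix `M` and an odd integer `λ`, the dimension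
over `ℝ` of the kernel of `M - λ•I` (the multiplicity of `λ` when `M` is symmetric) is at most
the 2-nullity of `M̄ + I`, where `M̄` is the mod-2 reduction of `M`. -/
theorem mult_odd_le_two_nullity {n : Type*} [Fintype n] [DecidableEq n]
    (M : Matrix n n ℤ) (lam : ℤ) (hlam : Odd lam) :
    Module.finrank ℝ
        (LinearMap.ker ((M.map (fun x => (x : ℝ))) - (lam : ℝ) • (1 : Matrix n n ℝ)).mulVecLin)
      ≤ Module.finrank (ZMod 2)
          (LinearMap.ker
            ((M.map (fun x => (x : ZMod 2))) + (1 : Matrix n n (ZMod 2))).mulVecLin) := by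
  set A : Matrix n n ℤ := M - lam • (1 : Matrix n n ℤ) with hA
  have h1 : (M.map (fun x => (x : ℝ))) - (lam : ℝ) • (1 : Matrix n n ℝ)
      = A.map (fun x => (x : ℝ)) := by
    ext i j
    by_cases h : i = j <;>
      simp [hA, Matrix.map_apply, Matrix.sub_apply, Matrix.smul_one_eq_diagonal,
        Matrix.diagonal_apply, h] <;> push_cast <;> ring
  have h2 : (M.map (fun x => (x : ZMod 2))) + (1 : Matrix n n (ZMod 2))
      = A.map (fun x => (x : ZMod 2)) := by
    obtain ⟨k, hk⟩ := hlam
    have hlam2 : (lam : ZMod 2) = 1 := by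
      rw [hk]; push_cast; rw [show ((2 : ZMod 2)) = 0 by decide]; ring
    ext i j
    by_cases h : i = j <;>
      simp [hA, Matrix.map_apply, Matrix.sub_apply, Matrix.smul_one_eq_diagonal,
        Matrix.diagonal_apply, h] <;> push_cast
    rw [hlam2, CharTwo.sub_eq_add]
  rw [h1, h2]
  have e1 : (A.map (fun x => (x : ℝ))).rank
      + Module.finrank ℝ (LinearMap.ker (A.map (fun x => (x : ℝ))).mulVecLin)
      = Fintype.card n := by
    rw [Matrix.rank]
    rw [LinearMap.finrank_range_add_finrank_ker]
    simp [Module.finrank_pi]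
  have e2 : (A.map (fun x => (x : ZMod 2))).rank
      + Module.finrank (ZMod 2) (LinearMap.ker (A.map (fun x => (x : ZMod 2))).mulVecLin)
      = Fintype.card n := by
    rw [Matrix.rank]
    rw [LinearMap.finrank_range_add_finrank_ker]
    simp [Module.finrank_pi]
  have := rank_mod_two_le A
  omega
end

section
/- Let G be a simple graph on a finite vertex set. Then the 2-nullity of the parity Laplacian P(G) equals β(G) + c(G). -/
open Matrix

/-- 2-nullity of a square matrix over 𝔽₂: the dimension of its kernel. -/
noncomputable def nullity2 {m : Type*} [Fintype m] (N : Matrix m m (ZMod 2)) : ℕ :=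
  Module.finrank (ZMod 2) (LinearMap.ker N.mulVecLin)

/-- The parity Laplacian of a graph: the Laplacian reduced mod 2. -/
def parityLap {V : Type*} [Fintype V] [DecidableEq V] (G : SimpleGraph V)
    [DecidableRel G.Adj] : Matrix V V (ZMod 2) :=
  Matrix.of fun u w => if u = w then (G.degree u : ZMod 2) else if G.Adj u w then 1 else 0

/-- Incidence matrix of `G` over 𝔽₂, rows indexed by vertices, columns by edges. -/
def incMat2 {V : Type*} [DecidableEq V] (G : SimpleGraph V) : Matrix V G.edgeSet (ZMod 2) :=
  Matrix.of fun v e => if v ∈ (e : Sym2 V) then 1 else 0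

/-- The bicycle number β(G): dimension over 𝔽₂ of the intersection of the cycle space
(kernel of the incidence matrix) and the cut space (row space of the incidence matrix). -/
noncomputable def bicycleDim {V : Type*} [Fintype V] [DecidableEq V] (G : SimpleGraph V)
    [DecidableRel G.Adj] : ℕ :=
  Module.finrank (ZMod 2)
    ↥(LinearMap.ker (incMat2 G).mulVecLin ⊓ LinearMap.range (incMat2 G)ᵀ.mulVecLin)

section Aux

open LinearMap Module

/-- Dimension formula for the kernel of a composition. -/
lemma finrank_ker_comp {K M N P : Type*} [Field K] [AddCommGroup M] [Module K M]
    [AddCommGroup N] [Module K N] [AddCommGroup P] [Module K P] [FiniteDimensional K N]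
    (f : M →ₗ[K] P) (g : N →ₗ[K] M) :
    finrank K (ker (f ∘ₗ g)) =
      finrank K (ker g) + finrank K (LinearMap.range g ⊓ ker f : Submodule K M) := by
  have hle : ker g ≤ ker (f ∘ₗ g) := by
    intro x hx
    have hgx : g x = 0 := mem_ker.mp hx
    exact mem_ker.mpr (by rw [LinearMap.comp_apply, hgx, map_zero])
  have hker : ker (f ∘ₗ g) = Submodule.comap g (ker f) := ker_comp g f
  have h := finrank_range_add_finrank_ker (g.domRestrict (ker (f ∘ₗ g)))
  rw [range_domRestrict, ker_domRestrict] at h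
  have h1 : finrank K (Submodule.comap (ker (f ∘ₗ g)).subtype (ker g)) = finrank K (ker g) :=
    (Submodule.comapSubtypeEquivOfLe hle).finrank_eq
  have h2 : Submodule.map g (ker (f ∘ₗ g)) = LinearMap.range g ⊓ ker f := by
    rw [hker, Submodule.map_comap_eq]
  rw [h1, h2] at h
  omega

variable {V : Type*} [Fintype V] [DecidableEq V] (G : SimpleGraph V) [DecidableRel G.Adj]

lemma parityLap_eq : parityLap G = incMat2 G * (incMat2 G)ᵀ := by
  ext u w
  simp only [parityLap, incMat2, Matrix.mul_apply, Matrix.transpose_apply, Matrix.of_apply,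
    ite_mul, one_mul, zero_mul]
  have key : ∀ (e : G.edgeSet),
      (if u ∈ (e : Sym2 V) then if w ∈ (e : Sym2 V) then (1 : ZMod 2) else 0 else 0) =
        if u ∈ (e : Sym2 V) ∧ w ∈ (e : Sym2 V) then 1 else 0 := by
    intro e; by_cases h1 : u ∈ (e : Sym2 V) <;> by_cases h2 : w ∈ (e : Sym2 V) <;> simp [h1, h2]
  rw [Finset.sum_congr rfl fun e _ => key e, Finset.sum_boole]
  by_cases huw : u = w
  · subst huw
    rw [if_pos rfl]
    congr 1
    rw [← SimpleGraph.card_incidenceFinset_eq_degree G u]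
    symm
    apply Finset.card_bij (fun (e : G.edgeSet) _ => (e : Sym2 V))
    · intro e he
      simp only [Finset.mem_filter, Finset.mem_univ, true_and] at he
      rw [SimpleGraph.mem_incidenceFinset]
      exact ⟨e.2, he.1⟩
    · intro e1 _ e2 _ h
      exact Subtype.ext h
    · intro e he
      rw [SimpleGraph.mem_incidenceFinset] at he
      refine ⟨⟨e, he.1⟩, ?_, rfl⟩
      simp only [Finset.mem_filter, Finset.mem_univ, true_and]
      exact ⟨he.2, he.2⟩
  · rw [if_neg huw]
    by_cases hadj : G.Adj u w
    · rw [if_pos hadj]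
      have : (Finset.univ.filter fun e : G.edgeSet => u ∈ (e : Sym2 V) ∧ w ∈ (e : Sym2 V))
          = {⟨s(u, w), hadj⟩} := by
        ext e
        simp only [Finset.mem_filter, Finset.mem_univ, true_and, Finset.mem_singleton]
        rw [Sym2.mem_and_mem_iff huw]
        constructor
        · intro h; exact Subtype.ext h
        · intro h; rw [h]
      rw [this]
      simp
    · rw [if_neg hadj]
      have : (Finset.univ.filter fun e : G.edgeSet => u ∈ (e : Sym2 V) ∧ w ∈ (e : Sym2 V))
          = ∅ := by
        ext e
        simp only [Finset.mem_filter, Finset.mem_univ, true_and, Finset.notMem_empty,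
          iff_false]
        intro h
        rw [Sym2.mem_and_mem_iff huw] at h
        exact hadj (by have := e.2; rwa [h, SimpleGraph.mem_edgeSet] at this)
      rw [this]
      simp

lemma inc_entry (x : V → ZMod 2) (u w : V) (h : G.Adj u w) :
    (incMat2 G)ᵀ.mulVec x ⟨s(u, w), h⟩ = x u + x w := by
  have hne : u ≠ w := h.ne
  simp only [Matrix.mulVec, dotProduct, Matrix.transpose_apply, incMat2,
    Matrix.of_apply, ite_mul, one_mul, zero_mul]
  have key : ∀ v : V, (if v ∈ (s(u, w) : Sym2 V) then x v else 0)
      = if v ∈ ({u, w} : Finset V) then x v else 0 := by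
    intro v; simp [Sym2.mem_iff]
  rw [Finset.sum_congr rfl fun v _ => key v, Finset.sum_ite_mem, Finset.univ_inter,
    Finset.sum_pair hne]

lemma mem_ker_transpose_iff (x : V → ZMod 2) :
    x ∈ ker (incMat2 G)ᵀ.mulVecLin ↔ ∀ u w, G.Adj u w → x u = x w := by
  constructor
  · intro hx u w h
    have h0 := congrFun (mem_ker.mp hx) (⟨s(u, w), h⟩ : G.edgeSet)
    rw [Matrix.mulVecLin_apply, inc_entry G x u w h, Pi.zero_apply] at h0
    have key : ∀ a b : ZMod 2, a + b = 0 → a = b := by decide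
    exact key _ _ h0
  · intro hx
    rw [mem_ker]
    funext e
    obtain ⟨e, he⟩ := e
    induction e with
    | h u w =>
      have hadj : G.Adj u w := (SimpleGraph.mem_edgeSet G).mp he
      rw [Matrix.mulVecLin_apply, inc_entry G x u w hadj, hx u w hadj,
        CharTwo.add_self_eq_zero]
      rfl

lemma reachable_const (x : V → ZMod 2) (hx : ∀ u w, G.Adj u w → x u = x w)
    {u w : V} (h : G.Reachable u w) : x u = x w := by
  obtain ⟨p⟩ := h
  induction p with
  | nil => rfl
  | cons h p ih => exact (hx _ _ h).trans ih

lemma finrank_ker_transpose :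
    finrank (ZMod 2) (ker (incMat2 G)ᵀ.mulVecLin) = Nat.card G.ConnectedComponent := by
  classical
  have : Finite G.ConnectedComponent := Quot.finite _
  cases nonempty_fintype G.ConnectedComponent
  let φ : (G.ConnectedComponent → ZMod 2) →ₗ[ZMod 2] ↥(ker (incMat2 G)ᵀ.mulVecLin) :=
    { toFun := fun c => ⟨fun v => c (G.connectedComponentMk v), by
        rw [mem_ker_transpose_iff]
        intro u w h
        congr 1
        exact SimpleGraph.ConnectedComponent.sound h.reachable⟩
      map_add' := fun a b => rfl
      map_smul' := fun a b => rfl }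
  have hbij : Function.Bijective φ := by
    constructor
    · intro c c' h
      funext comp
      obtain ⟨v, rfl⟩ := comp.exists_rep
      exact congrFun (congrArg Subtype.val h) v
    · rintro ⟨x, hx⟩
      have hx' := (mem_ker_transpose_iff G x).mp hx
      refine ⟨Quot.lift x (fun u w h => reachable_const G x hx' h), ?_⟩
      exact Subtype.ext (funext fun v => rfl)
  rw [(LinearEquiv.ofBijective φ hbij).symm.finrank_eq, finrank_pi,
    Nat.card_eq_fintype_card]

end Aux

/-- The 2-nullity of the parity Laplacian equals `β(G) + c(G)`. -/
theorem two_nullity_parityLap_eq {V : Type*} [Fintype V] [DecidableEq V]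
    (G : SimpleGraph V) [DecidableRel G.Adj] :
    nullity2 (parityLap G) = bicycleDim G + Nat.card G.ConnectedComponent := by
  rw [nullity2, parityLap_eq, Matrix.mulVecLin_mul,
    finrank_ker_comp (incMat2 G).mulVecLin (incMat2 G)ᵀ.mulVecLin,
    finrank_ker_transpose, bicycleDim, inf_comm, add_comm]
end

section
/- Let G be a simple graph on a finite vertex set and let c₁, …, c_t be a family of t pairwise edge-disjoint odd cycles of G. Then β(G) + t + v(G) ≤ e(G) + c(G) (equivalently, β(G) ≤ θ(G) − t where θ(G) = e(G) − v(G) + c(G) is the circuit rank). -/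
open Matrix

section Aux

variable {V : Type*} [Fintype V] [DecidableEq V] (G : SimpleGraph V) [DecidableRel G.Adj]

private lemma zmod2_sq : ∀ r : ZMod 2, r * r = r := by decide

private lemma zmod2_add_eq_zero {a b : ZMod 2} (h : a + b = 0) : a = b := by
  revert a b; decide

/-- Splitting the membership indicator of a 2-element `Sym2`. -/
private lemma ite_mem_sym2 (u v a : V) (huv : u ≠ v) (r : ZMod 2) :
    (if a ∈ s(u, v) then r else 0) =
      (if a = u then r else 0) + (if a = v then r else 0) := by
  by_cases h1 : a = u
  · subst h1; simp [Sym2.mem_iff, huv]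
  · by_cases h2 : a = v
    · subst h2; simp [Sym2.mem_iff, h1]
    · simp [Sym2.mem_iff, h1, h2]

/-- Sum over vertices of the incidence indicator times `g`. -/
private lemma sum_incident (u v : V) (huv : u ≠ v) (g : V → ZMod 2) :
    (∑ a : V, (if a ∈ s(u, v) then (1 : ZMod 2) else 0) * g a) = g u + g v := by
  have : ∀ a : V, (if a ∈ s(u, v) then (1 : ZMod 2) else 0) * g a
      = (if a = u then g a else 0) + (if a = v then g a else 0) := by
    intro a
    rw [ite_mem_sym2 u v a huv, add_mul]
    by_cases h1 : a = u <;> by_cases h2 : a = v <;> simp [h1, h2]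
  rw [Finset.sum_congr rfl fun a _ => this a, Finset.sum_add_distrib]
  simp [Finset.sum_ite_eq']

/-- The edge vector of a walk: counts (mod 2) of each edge. -/
private def walkVec {a b : V} (p : G.Walk a b) : G.edgeSet → ZMod 2 :=
  fun e => ((p.edges.count (e : Sym2 V) : ℕ) : ZMod 2)

private lemma mulVec_walkVec {a b : V} (p : G.Walk a b) :
    (incMat2 G).mulVec (walkVec G p) =
      fun x => (if x = a then (1 : ZMod 2) else 0) + (if x = b then 1 else 0) := by
  induction p with
  | nil =>
    funext xx
    simp [walkVec, Matrix.mulVec, dotProduct, CharTwo.add_self_eq_zero]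
  | @cons u c d h p ih =>
    let e₀ : G.edgeSet := ⟨s(u, c), G.mem_edgeSet.mpr h⟩
    have hsplit : walkVec G (SimpleGraph.Walk.cons h p) =
        walkVec G p + fun e : G.edgeSet => if e = e₀ then (1 : ZMod 2) else 0 := by
      funext e
      simp only [walkVec, SimpleGraph.Walk.edges_cons, List.count_cons, Pi.add_apply]
      push_cast
      congr 1
      have : ((e : Sym2 V) = s(u, c)) ↔ e = e₀ := by
        constructor
        · intro hh; exact Subtype.ext hh
        · intro hh; exact congrArg Subtype.val hh
      by_cases hh : e = e₀
      · simp [hh, this.mpr hh]; rfl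
      · have h3 : ¬ ((e : Sym2 V) = s(u, c)) := fun hhh => hh (this.mp hhh)
        have h4 : ¬ (s(u, c) = (e : Sym2 V)) := fun hhh => h3 hhh.symm
        simp [hh, h3, h4]
    rw [hsplit, Matrix.mulVec_add, ih]
    funext x
    have hδ : (incMat2 G).mulVec (fun e : G.edgeSet => if e = e₀ then (1 : ZMod 2) else 0) x
        = if x ∈ s(u, c) then 1 else 0 := by
      simp only [Matrix.mulVec, dotProduct, mul_ite, mul_one, mul_zero]
      rw [Finset.sum_ite_eq' Finset.univ e₀ fun e => incMat2 G x e]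
      simp [incMat2, e₀]
    simp only [Pi.add_apply, hδ]
    rw [ite_mem_sym2 u c x h.ne]
    set A := if x = u then (1 : ZMod 2) else 0
    set B := if x = c then (1 : ZMod 2) else 0
    set C := if x = d then (1 : ZMod 2) else 0
    have : B + C + (A + B) = A + C + (B + B) := by ring
    rw [this, CharTwo.add_self_eq_zero, add_zero]

/-- Counting: the total of edge counts over all edges equals the length of the edge list. -/
private lemma sum_count_eq_length {a b : V} (p : G.Walk a b) :
    (∑ e : G.edgeSet, p.edges.count (e : Sym2 V)) = p.edges.length := by
  classical
  set l := p.edges with hl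
  have hsub : ∀ x ∈ l, x ∈ G.edgeSet := fun x hx => p.edges_subset_edgeSet hx
  have himg : ∑ s₀ ∈ (Finset.univ : Finset G.edgeSet).image Subtype.val, l.count s₀
      = ∑ e : G.edgeSet, l.count (e : Sym2 V) :=
    Finset.sum_image (fun e _ f _ h => Subtype.ext h)
  rw [← himg]
  have hss : l.toFinset ⊆ (Finset.univ : Finset G.edgeSet).image Subtype.val := by
    intro x hx
    rw [List.mem_toFinset] at hx
    exact Finset.mem_image.mpr ⟨⟨x, hsub x hx⟩, Finset.mem_univ _, rfl⟩
  rw [← Finset.sum_subset hss (fun x _ hx => List.count_eq_zero.mpr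
      (fun hmem => hx (List.mem_toFinset.mpr hmem)))]
  have := Multiset.toFinset_sum_count_eq (l : Multiset (Sym2 V))
  simpa using this

end Aux

/-- If `G` has `t` pairwise edge-disjoint odd cycles, then
`β(G) + t + v(G) ≤ e(G) + c(G)`, i.e. `β(G) ≤ θ(G) - t`. -/
theorem bicycleDim_add_disjoint_odd_cycles_le {V : Type*} [Fintype V] [DecidableEq V]
    (G : SimpleGraph V) [DecidableRel G.Adj]
    (t : ℕ) (x : Fin t → V) (w : ∀ i, G.Walk (x i) (x i))
    (hcyc : ∀ i, (w i).IsCycle) (hodd : ∀ i, Odd (w i).length)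
    (hdisj : ∀ i j, i ≠ j → ∀ e, e ∈ (w i).edges → e ∉ (w j).edges) :
    bicycleDim G + t + Fintype.card V ≤ Nat.card G.edgeSet + Nat.card G.ConnectedComponent := by
  classical
  set N := incMat2 G with hN
  set K := LinearMap.ker N.mulVecLin with hK
  set R := LinearMap.range Nᵀ.mulVecLin with hR
  set B := K ⊓ R with hB
  -- cycle vectors
  set z : Fin t → (G.edgeSet → ZMod 2) := fun i => walkVec G (w i) with hz
  -- each cycle vector is in the cycle space
  have hzK : ∀ i, z i ∈ K := by
    intro i
    rw [hK, LinearMap.mem_ker, Matrix.mulVecLin_apply, hz]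
    rw [mulVec_walkVec]
    funext a
    simp [CharTwo.add_self_eq_zero]
  -- dot products of cycle vectors
  have hdot : ∀ i j, z i ⬝ᵥ z j = if i = j then 1 else 0 := by
    intro i j
    by_cases hij : i = j
    · subst hij
      simp only [if_pos rfl, dotProduct, hz, walkVec, zmod2_sq]
      rw [← Nat.cast_sum, sum_count_eq_length]
      obtain ⟨k, hk⟩ := hodd i
      rw [SimpleGraph.Walk.length_edges, hk]
      push_cast
      have : ((2 : ZMod 2)) = 0 := by decide
      rw [this]; ring
    · simp only [if_neg hij, dotProduct, hz, walkVec]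
      have : ∀ e : G.edgeSet,
          (((w i).edges.count (e : Sym2 V) : ℕ) : ZMod 2)
            * (((w j).edges.count (e : Sym2 V) : ℕ) : ZMod 2) = 0 := by
        intro e
        by_cases he : (e : Sym2 V) ∈ (w i).edges
        · rw [List.count_eq_zero.mpr (hdisj i j hij _ he), Nat.cast_zero, mul_zero]
        · rw [List.count_eq_zero.mpr he, Nat.cast_zero, zero_mul]
      rw [Finset.sum_congr rfl fun e _ => this e]
      simp
  -- cut vectors are orthogonal to cycle vectors
  have hortho : ∀ u ∈ R, ∀ zz ∈ K, u ⬝ᵥ zz = 0 := by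
    rintro u hu zz hzz
    obtain ⟨y, rfl⟩ := hu
    rw [Matrix.mulVecLin_apply, Matrix.mulVec_transpose, ← Matrix.dotProduct_mulVec]
    rw [hK, LinearMap.mem_ker, Matrix.mulVecLin_apply] at hzz
    rw [hzz, dotProduct_zero]
  -- the span of the cycle vectors
  set W := Submodule.span (ZMod 2) (Set.range z) with hW
  have hWK : W ≤ K := Submodule.span_le.mpr (Set.range_subset_iff.mpr hzK)
  -- linear independence
  have hind : LinearIndependent (ZMod 2) z := by
    rw [Fintype.linearIndependent_iff]
    intro c hc j
    have : (∑ i, c i • z i) ⬝ᵥ z j = c j := by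
      rw [show (∑ i, c i • z i) ⬝ᵥ z j = ∑ i, c i * (z i ⬝ᵥ z j) by
        simp [dotProduct, Finset.sum_mul, Finset.mul_sum, mul_assoc]
        rw [Finset.sum_comm]]
      simp [hdot, Finset.sum_ite_eq']
    rw [hc] at this
    rw [← this, zero_dotProduct]
  -- B ∩ W = 0
  have hdisjBW : B ⊓ W = ⊥ := by
    rw [eq_bot_iff]
    rintro u hu
    rw [Submodule.mem_inf, hB, Submodule.mem_inf] at hu
    obtain ⟨⟨huK, huR⟩, huW⟩ := hu
    obtain ⟨c, hc⟩ := (Submodule.mem_span_range_iff_exists_fun _).mp huW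
    have hc0 : ∀ j, c j = 0 := by
      intro j
      have h1 : u ⬝ᵥ z j = 0 := hortho u huR (z j) (hzK j)
      have h2 : u ⬝ᵥ z j = c j := by
        rw [← hc]
        rw [show (∑ i, c i • z i) ⬝ᵥ z j = ∑ i, c i * (z i ⬝ᵥ z j) by
          simp [dotProduct, Finset.sum_mul, Finset.mul_sum, mul_assoc]
          rw [Finset.sum_comm]]
        simp [hdot, Finset.sum_ite_eq']
      rw [h2] at h1; exact h1
    rw [Submodule.mem_bot, ← hc]
    simp [hc0]
  -- finrank of W is t
  have hWt : Module.finrank (ZMod 2) W = t := by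
    rw [hW, finrank_span_eq_card hind, Fintype.card_fin]
  -- β + t ≤ dim K
  have h1 : Module.finrank (ZMod 2) B + t ≤ Module.finrank (ZMod 2) K := by
    have := Submodule.finrank_sup_add_finrank_inf_eq B W
    rw [hdisjBW, finrank_bot, add_zero] at this
    rw [← hWt, ← this]
    exact Submodule.finrank_mono (sup_le (by rw [hB]; exact inf_le_left) hWK)
  -- rank-nullity for N
  haveI : Fact (Nat.Prime 2) := ⟨Nat.prime_two⟩
  have h2 : Module.finrank (ZMod 2) (LinearMap.range N.mulVecLin) +
      Module.finrank (ZMod 2) K = Nat.card G.edgeSet := by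
    rw [hK, LinearMap.finrank_range_add_finrank_ker, Module.finrank_fintype_fun_eq_card,
      Nat.card_eq_fintype_card]
  -- rank-nullity for Nᵀ
  have h4 : Module.finrank (ZMod 2) (LinearMap.range Nᵀ.mulVecLin) +
      Module.finrank (ZMod 2) (LinearMap.ker Nᵀ.mulVecLin) = Fintype.card V := by
    rw [LinearMap.finrank_range_add_finrank_ker, Module.finrank_fintype_fun_eq_card]
  -- rank of transpose
  have h5 : Module.finrank (ZMod 2) (LinearMap.range Nᵀ.mulVecLin)
      = Module.finrank (ZMod 2) (LinearMap.range N.mulVecLin) :=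
    Matrix.rank_transpose N
  -- kernel of the transpose: constant functions on components
  have h3 : Module.finrank (ZMod 2) (LinearMap.ker Nᵀ.mulVecLin)
      = Nat.card G.ConnectedComponent := by
    set L : (G.ConnectedComponent → ZMod 2) →ₗ[ZMod 2] (V → ZMod 2) :=
      LinearMap.funLeft (ZMod 2) (ZMod 2) G.connectedComponentMk with hL
    have hcol : ∀ (g : V → ZMod 2) (e : G.edgeSet), Nᵀ.mulVec g e
        = ∑ a : V, (if a ∈ (e : Sym2 V) then (1 : ZMod 2) else 0) * g a := by
      intro g e
      simp [Matrix.mulVec, dotProduct, Matrix.transpose_apply, hN, incMat2]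
    have hrange : LinearMap.range L = LinearMap.ker Nᵀ.mulVecLin := by
      apply le_antisymm
      · rintro y ⟨f, rfl⟩
        rw [LinearMap.mem_ker, Matrix.mulVecLin_apply]
        funext e
        obtain ⟨e, he⟩ := e
        induction e using Sym2.ind with
        | _ u v =>
          have hadj : G.Adj u v := G.mem_edgeSet.mp he
          rw [hcol]
          have := sum_incident u v hadj.ne (L f)
          simp only [Subtype.coe_mk] at this ⊢
          rw [this]
          have : L f u = L f v := by
            simp only [hL, LinearMap.funLeft_apply]
            rw [SimpleGraph.ConnectedComponent.connectedComponentMk_eq_of_adj hadj]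
          rw [this, CharTwo.add_self_eq_zero]
          rfl
      · intro y hy
        rw [LinearMap.mem_ker, Matrix.mulVecLin_apply] at hy
        have hadj : ∀ u v, G.Adj u v → y u = y v := by
          intro u v huv
          have he : s(u, v) ∈ G.edgeSet := G.mem_edgeSet.mpr huv
          have h0 : Nᵀ.mulVec y ⟨s(u, v), he⟩ = 0 := by rw [hy]; rfl
          rw [hcol, sum_incident u v huv.ne] at h0
          exact zmod2_add_eq_zero h0
        have hwalk : ∀ (u v : V) (p : G.Walk u v), y u = y v := by
          intro u v p
          induction p with
          | nil => rfl
          | cons h p ih => exact (hadj _ _ h).trans ih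
        refine ⟨SimpleGraph.ConnectedComponent.lift y (fun u v p _ => hwalk u v p), ?_⟩
        funext a
        rfl
    have hinj : Function.Injective L :=
      LinearMap.funLeft_injective_of_surjective (ZMod 2) (ZMod 2) _
        (fun c => c.exists_rep)
    rw [← hrange, LinearMap.finrank_range_of_inj hinj,
      Module.finrank_fintype_fun_eq_card, Nat.card_eq_fintype_card]
  -- put everything together
  have hbd : bicycleDim G = Module.finrank (ZMod 2) B := rfl
  omega
end

section
/- Let G be a simple graph on a finite vertex set in which every vertex has even degree, and let c₁, …, c_t be a family of t pairwise edge-disjoint odd cycles of G. Then the 2-nullity of the adjacency matrix Ā(G) over 𝔽₂ satisfies 2-η_Ā(G) + t + v(G) ≤ e(G) + 2·c(G). -/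
open Matrix

section Aux

open Module Finset

/-- finrank of the kernel of a composition. -/
lemma aux_finrank_ker_comp {K α β γ : Type*} [Field K] [AddCommGroup α] [Module K α]
    [AddCommGroup β] [Module K β] [AddCommGroup γ] [Module K γ] [FiniteDimensional K γ]
    (g : γ →ₗ[K] α) (f : α →ₗ[K] β) :
    finrank K (LinearMap.ker (f ∘ₗ g)) =
      finrank K (LinearMap.ker g) + finrank K ↥(LinearMap.range g ⊓ LinearMap.ker f) := by
  have hle : LinearMap.ker g ≤ LinearMap.ker (f ∘ₗ g) := by
    intro x hx
    simp [LinearMap.mem_ker, LinearMap.mem_ker.mp hx]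
  set p := LinearMap.ker (f ∘ₗ g) with hp
  let h := g.domRestrict p
  have hr : LinearMap.range h = LinearMap.range g ⊓ LinearMap.ker f := by
    rw [LinearMap.range_domRestrict]
    have : p = Submodule.comap g (LinearMap.ker f) := LinearMap.ker_comp g f
    rw [this, Submodule.map_comap_eq]
  have hk : finrank K (LinearMap.ker h) = finrank K (LinearMap.ker g) := by
    rw [LinearMap.ker_domRestrict]
    exact (Submodule.comapSubtypeEquivOfLe hle).finrank_eq
  have := LinearMap.finrank_range_add_finrank_ker h
  rw [hr, hk] at this
  omega

variable {V : Type*} [Fintype V] [DecidableEq V] (G : SimpleGraph V) [DecidableRel G.Adj]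

/-- Incidence matrix of `G` with columns indexed by the edge set, over 𝔽₂. -/
def incE : Matrix V G.edgeSet (ZMod 2) := fun v e => if v ∈ (e : Sym2 V) then 1 else 0

omit [DecidableEq V] in
lemma sum_edges_eq (f : Sym2 V → ZMod 2) :
    ∑ e : G.edgeSet, f e.val = ∑ e ∈ G.edgeFinset, f e := by
  rw [Finset.sum_subtype G.edgeFinset (fun x => G.mem_edgeFinset) f]

lemma sum_ite_mem_sym2 {a b : V} (hab : a ≠ b) (g : V → ZMod 2) :
    ∑ v : V, (if v ∈ s(a,b) then g v else 0) = g a + g b := by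
  have h : ∀ v : V, (if v ∈ s(a,b) then g v else 0)
      = if v ∈ ({a,b} : Finset V) then g v else 0 := by
    intro v; simp [Sym2.mem_iff]
  simp_rw [h]
  rw [Finset.sum_ite_mem, Finset.univ_inter, Finset.sum_pair hab]

/-- For even graphs, the adjacency matrix over 𝔽₂ factors through the incidence matrix. -/
lemma adj_eq_inc_mul (heven : ∀ v, Even (G.degree v)) :
    G.adjMatrix (ZMod 2) = incE G * (incE G)ᵀ := by
  ext u v
  rw [Matrix.mul_apply]
  simp only [incE, transpose_apply]
  by_cases huv : u = v
  · subst huv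
    have h1 : ∀ e : G.edgeSet, (if u ∈ (e : Sym2 V) then (1:ZMod 2) else 0) *
        (if u ∈ (e : Sym2 V) then 1 else 0) = if u ∈ (e : Sym2 V) then 1 else 0 := by
      intro e; split <;> simp
    simp_rw [h1]
    rw [sum_edges_eq G (fun s => if u ∈ s then (1:ZMod 2) else 0)]
    rw [Finset.sum_boole]
    have h3 : G.edgeFinset.filter (fun e => u ∈ e) = G.incidenceFinset u := by
      ext e
      simp [SimpleGraph.mem_incidenceFinset, SimpleGraph.incidenceSet,
        SimpleGraph.mem_edgeFinset]
    rw [h3, SimpleGraph.card_incidenceFinset_eq_degree]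
    have h4 : ((G.degree u : ℕ) : ZMod 2) = 0 :=
      (ZMod.natCast_eq_zero_iff _ 2).mpr (heven u).two_dvd
    rw [h4]
    simp
  · have h1 : ∀ e : G.edgeSet, (if u ∈ (e : Sym2 V) then (1:ZMod 2) else 0) *
        (if v ∈ (e : Sym2 V) then 1 else 0) = if (e : Sym2 V) = s(u,v) then 1 else 0 := by
      intro e
      have hQ : (u ∈ (e:Sym2 V) ∧ v ∈ (e:Sym2 V)) ↔ (e:Sym2 V) = s(u,v) :=
        Sym2.mem_and_mem_iff huv
      simp only [ite_mul, one_mul, zero_mul, ← ite_and, hQ]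
    simp_rw [h1]
    rw [sum_edges_eq G (fun s => if s = s(u,v) then (1:ZMod 2) else 0),
      Finset.sum_ite_eq' G.edgeFinset (s(u,v)) (fun _ => (1:ZMod 2))]
    simp [SimpleGraph.mem_edgeFinset]

lemma delta_apply (g : V → ZMod 2) {a b : V} (hab : G.Adj a b) :
    ((incE G)ᵀ.mulVecLin g) ⟨s(a,b), hab⟩ = g a + g b := by
  simp only [mulVecLin_apply, Matrix.mulVec, dotProduct, transpose_apply, incE]
  have h : ∀ v : V, (if v ∈ s(a,b) then (1:ZMod 2) else 0) * g v
      = if v ∈ s(a,b) then g v else 0 := by intro v; split <;> simp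
  simp_rw [h]
  exact sum_ite_mem_sym2 hab.ne g

lemma ker_delta_eq :
    LinearMap.ker (incE G)ᵀ.mulVecLin =
      LinearMap.range (LinearMap.funLeft (ZMod 2) (ZMod 2) G.connectedComponentMk) := by
  ext g
  constructor
  · intro hg
    have hstep : ∀ a b : V, G.Adj a b → g a = g b := by
      intro a b hab
      have := congrFun (LinearMap.mem_ker.mp hg) ⟨s(a,b), hab⟩
      rw [delta_apply G g hab] at this
      have h2 : g a + g b + g b = g b := by rw [this]; simp
      rwa [add_assoc, CharTwo.add_self_eq_zero, add_zero] at h2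
    have hwalk : ∀ (a b : V) (p : G.Walk a b), g a = g b := by
      intro a b p
      induction p with
      | nil => rfl
      | cons h q ih => exact (hstep _ _ h).trans ih
    refine ⟨SimpleGraph.ConnectedComponent.lift g (fun a b p _ => hwalk a b p), ?_⟩
    ext v
    rfl
  · rintro ⟨h, rfl⟩
    rw [LinearMap.mem_ker]
    ext e
    obtain ⟨⟨a, b⟩, hab⟩ := e
    have hadj : G.Adj a b := hab
    rw [delta_apply G _ hadj]
    simp only [LinearMap.funLeft_apply, Function.comp_apply, Pi.zero_apply]
    rw [SimpleGraph.ConnectedComponent.sound hadj.reachable]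
    exact CharTwo.add_self_eq_zero _

lemma finrank_ker_delta :
    finrank (ZMod 2) (LinearMap.ker (incE G)ᵀ.mulVecLin) = Nat.card G.ConnectedComponent := by
  rw [ker_delta_eq]
  haveI : Fintype G.ConnectedComponent := Fintype.ofFinite _
  have hinj : Function.Injective (LinearMap.funLeft (ZMod 2) (ZMod 2) G.connectedComponentMk) :=
    LinearMap.funLeft_injective_of_surjective _ _ _ Quot.mk_surjective
  rw [← (LinearEquiv.ofInjective _ hinj).finrank_eq, Module.finrank_pi, Nat.card_eq_fintype_card]

omit [Fintype V] [DecidableRel G.Adj] in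
lemma walk_parity {a b : V} (p : G.Walk a b) (v : V) :
    (p.edges.map (fun e => if v ∈ e then (1:ZMod 2) else 0)).sum
      = (if v = a then 1 else 0) + (if v = b then 1 else 0) := by
  induction p with
  | nil => simp only [SimpleGraph.Walk.edges_nil, List.map_nil, List.sum_nil]; split <;> decide
  | @cons a c b h q ih =>
    rw [SimpleGraph.Walk.edges_cons, List.map_cons, List.sum_cons, ih]
    have hac : a ≠ c := h.ne
    have hmem : (v ∈ s(a,c)) ↔ (v = a ∨ v = c) := Sym2.mem_iff
    split_ifs with h1 h2 h3 h4 h5 h6 h7 <;> simp_all <;> decide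

lemma sum_over_list (l : List (Sym2 V)) (hnd : l.Nodup) (hsub : ∀ e ∈ l, e ∈ G.edgeSet)
    (f : Sym2 V → ZMod 2) :
    (∑ e : G.edgeSet, if e.val ∈ l then f e.val else 0) = (l.map f).sum := by
  rw [sum_edges_eq G (fun s => if s ∈ l then f s else 0)]
  have h1 : ∀ s ∈ G.edgeFinset, (if s ∈ l then f s else 0)
      = if s ∈ l.toFinset then f s else 0 := by intro s _; simp
  have h2 : G.edgeFinset ∩ l.toFinset = l.toFinset := by
    apply Finset.inter_eq_right.mpr
    intro s hs
    rw [SimpleGraph.mem_edgeFinset]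
    exact hsub s (List.mem_toFinset.mp hs)
  rw [Finset.sum_congr rfl h1, Finset.sum_ite_mem, h2, List.sum_toFinset f hnd]

lemma sum_smul_dot {α : Type*} [Fintype α] {n : ℕ} (c : Fin n → ZMod 2)
    (z : Fin n → α → ZMod 2) (y : α → ZMod 2) :
    (∑ i, c i • z i) ⬝ᵥ y = ∑ i, c i * (z i ⬝ᵥ y) := by
  simp only [dotProduct, Finset.sum_apply, Pi.smul_apply, smul_eq_mul, Finset.sum_mul]
  rw [Finset.sum_comm]
  simp [Finset.mul_sum, mul_assoc]

end Aux

open Module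

/-- If every vertex of `G` has even degree and `G` has `t` pairwise
edge-disjoint odd cycles, then `2-η_Ā(G) + t + v(G) ≤ e(G) + 2·c(G)`. -/
theorem two_nullity_adj_even_graph_le {V : Type*} [Fintype V] [DecidableEq V]
    (G : SimpleGraph V) [DecidableRel G.Adj]
    (heven : ∀ v, Even (G.degree v))
    (t : ℕ) (x : Fin t → V) (w : ∀ i, G.Walk (x i) (x i))
    (hcyc : ∀ i, (w i).IsCycle) (hodd : ∀ i, Odd (w i).length)
    (hdisj : ∀ i j, i ≠ j → ∀ e, e ∈ (w i).edges → e ∉ (w j).edges) :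
    nullity2 (G.adjMatrix (ZMod 2)) + t + Fintype.card V
      ≤ Nat.card G.edgeSet + 2 * Nat.card G.ConnectedComponent := by
  classical
  set M := incE G with hM
  set d := M.mulVecLin with hd0
  set δ := Mᵀ.mulVecLin with hδ0
  -- decomposition of the nullity
  have hA : (G.adjMatrix (ZMod 2)).mulVecLin = d ∘ₗ δ := by
    rw [adj_eq_inc_mul G heven, Matrix.mulVecLin_mul]
  have hnull : nullity2 (G.adjMatrix (ZMod 2))
      = finrank (ZMod 2) (LinearMap.ker δ) + finrank (ZMod 2) ↥(LinearMap.range δ ⊓ LinearMap.ker d) := by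
    show finrank (ZMod 2) (LinearMap.ker (G.adjMatrix (ZMod 2)).mulVecLin) = _
    rw [hA, aux_finrank_ker_comp δ d]
  -- the cycle vectors
  set z : Fin t → (G.edgeSet → (ZMod 2)) :=
    fun i e => if e.val ∈ (w i).edges then 1 else 0 with hz
  have hnodup : ∀ i, ((w i).edges).Nodup := fun i => (hcyc i).isTrail.edges_nodup
  have hsub : ∀ i, ∀ e ∈ (w i).edges, e ∈ G.edgeSet :=
    fun i e he => (w i).edges_subset_edgeSet he
  -- each cycle vector lies in ker d
  have hzker : ∀ i, z i ∈ LinearMap.ker d := by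
    intro i
    rw [LinearMap.mem_ker]
    ext v
    show (M *ᵥ z i) v = 0
    simp only [Matrix.mulVec, dotProduct, hM, incE, hz]
    have h1 : ∀ e : G.edgeSet, (if v ∈ (e : Sym2 V) then (1:(ZMod 2)) else 0) *
        (if e.val ∈ (w i).edges then 1 else 0)
        = if e.val ∈ (w i).edges then (if v ∈ (e : Sym2 V) then (1:(ZMod 2)) else 0) else 0 := by
      intro e; rw [mul_ite, mul_one, mul_zero]
    simp_rw [h1]
    rw [sum_over_list G ((w i).edges) (hnodup i) (hsub i)
      (fun s => if v ∈ s then (1:(ZMod 2)) else 0), walk_parity G (w i) v]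
    split <;> decide
  -- Gram relations
  have hgram_self : ∀ i, z i ⬝ᵥ z i = 1 := by
    intro i
    simp only [dotProduct, hz]
    have h1 : ∀ e : G.edgeSet, (if e.val ∈ (w i).edges then (1:(ZMod 2)) else 0) *
        (if e.val ∈ (w i).edges then 1 else 0)
        = if e.val ∈ (w i).edges then (1:(ZMod 2)) else 0 := by
      intro e; split <;> simp
    simp_rw [h1]
    have h2 : (∑ e : G.edgeSet, if e.val ∈ (w i).edges then (fun _ => (1:(ZMod 2))) e.val else 0)
        = (((w i).edges).map (fun _ => (1:(ZMod 2)))).sum :=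
      sum_over_list G ((w i).edges) (hnodup i) (hsub i) (fun _ => (1:(ZMod 2)))
    simp only at h2
    rw [h2, List.map_const', List.sum_replicate, SimpleGraph.Walk.length_edges, nsmul_eq_mul,
      mul_one]
    obtain ⟨k, hk⟩ := hodd i
    rw [hk]
    push_cast
    rw [show (2:(ZMod 2)) = 0 from rfl]
    ring
  have hgram_off : ∀ i j, i ≠ j → z i ⬝ᵥ z j = 0 := by
    intro i j hij
    simp only [dotProduct, hz]
    apply Finset.sum_eq_zero
    intro e _
    by_cases h1 : e.val ∈ (w i).edges
    · rw [if_neg (hdisj i j hij e.val h1), mul_zero]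
    · rw [if_neg h1, zero_mul]
  -- key pairing computation
  have hkey : ∀ (c : Fin t → (ZMod 2)) (j : Fin t), (∑ i, c i • z i) ⬝ᵥ z j = c j := by
    intro c j
    rw [sum_smul_dot]
    rw [Finset.sum_eq_single j]
    · rw [hgram_self j, mul_one]
    · intro i _ hij; rw [hgram_off i j hij, mul_zero]
    · intro h; exact absurd (Finset.mem_univ j) h
  -- range δ is orthogonal to the cycle vectors
  have hdot : ∀ f, f ∈ LinearMap.range δ → ∀ j, f ⬝ᵥ z j = 0 := by
    rintro _ ⟨g, rfl⟩ j
    show (Mᵀ *ᵥ g) ⬝ᵥ z j = 0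
    rw [Matrix.mulVec_transpose, ← Matrix.dotProduct_mulVec]
    have : M *ᵥ z j = 0 := LinearMap.mem_ker.mp (hzker j)
    rw [this, dotProduct_zero]
  -- independence of the cycle vectors
  have hindep : LinearIndependent (ZMod 2) z := by
    rw [Fintype.linearIndependent_iff]
    intro c hc j
    have := congrArg (fun f => f ⬝ᵥ z j) hc
    simpa [hkey c j] using this
  -- span of cycle vectors is disjoint from range δ ⊓ ker d
  have hdisj2 : Disjoint (Submodule.span (ZMod 2) (Set.range z))
      (LinearMap.range δ ⊓ LinearMap.ker d) := by
    rw [Submodule.disjoint_def]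
    intro f hfU hfS
    obtain ⟨c, rfl⟩ := (Submodule.mem_span_range_iff_exists_fun (ZMod 2)).mp hfU
    have hc0 : ∀ j, c j = 0 := by
      intro j
      rw [← hkey c j]
      exact hdot _ hfS.1 j
    simp [funext hc0]
  -- dimension bookkeeping
  have hspan : finrank (ZMod 2) ↥(Submodule.span (ZMod 2) (Set.range z)) = t := by
    rw [finrank_span_eq_card hindep, Fintype.card_fin]
  have hUS : t + finrank (ZMod 2) ↥(LinearMap.range δ ⊓ LinearMap.ker d)
      ≤ finrank (ZMod 2) (LinearMap.ker d) := by
    have h1 := Submodule.finrank_sup_add_finrank_inf_eq (Submodule.span (ZMod 2) (Set.range z))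
      (LinearMap.range δ ⊓ LinearMap.ker d)
    rw [hdisj2.eq_bot, finrank_bot, add_zero] at h1
    have h2 : Submodule.span (ZMod 2) (Set.range z) ⊔ (LinearMap.range δ ⊓ LinearMap.ker d)
        ≤ LinearMap.ker d := by
      apply sup_le
      · rw [Submodule.span_le]
        rintro _ ⟨i, rfl⟩
        exact hzker i
      · exact inf_le_right
    have h3 := Submodule.finrank_mono h2
    omega
  have hrn_d := LinearMap.finrank_range_add_finrank_ker d
  have hrn_δ := LinearMap.finrank_range_add_finrank_ker δ
  have hrank : finrank (ZMod 2) (LinearMap.range d) = finrank (ZMod 2) (LinearMap.range δ) :=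
    (Matrix.rank_transpose M).symm
  have hpiE : finrank (ZMod 2) (G.edgeSet → (ZMod 2)) = Nat.card G.edgeSet := by
    rw [Module.finrank_pi, Nat.card_eq_fintype_card]
  have hpiV : finrank (ZMod 2) (V → (ZMod 2)) = Fintype.card V := Module.finrank_pi (ZMod 2)
  have hker_δ : finrank (ZMod 2) (LinearMap.ker δ) = Nat.card G.ConnectedComponent :=
    finrank_ker_delta G
  rw [hpiE] at hrn_d
  rw [hpiV] at hrn_δ
  omega
end

section
/- Let G be a simple graph on a finite vertex set in which every vertex has odd degree, and let c₁, …, c_t be a family of t pairwise edge-disjoint odd cycles of G. Then the 2-nullity of Ā(G) + I over 𝔽₂ satisfies 2-η_{Ā+I}(G) + t + v(G) ≤ e(G) + 2·c(G). -/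
open Matrix

namespace TwoNullityAux

variable {V : Type*} [Fintype V] [DecidableEq V] (G : SimpleGraph V) [DecidableRel G.Adj]

/-- Incidence matrix of `G` over `𝔽₂`, indexed by vertices and edges. -/
def M : Matrix V G.edgeSet (ZMod 2) := fun v e => if v ∈ (e : Sym2 V) then 1 else 0

lemma ind_pair {u w : V} (hne : u ≠ w) (v : V) :
    (if v ∈ s(u, w) then (1 : ZMod 2) else 0)
      = (if v = u then 1 else 0) + (if v = w then 1 else 0) := by
  by_cases h1 : v = u <;> by_cases h2 : v = w <;> simp_all [Sym2.mem_iff]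

lemma walk_sum {a b : V} (p : G.Walk a b) (v : V) :
    (p.edges.map (fun e => if v ∈ e then (1 : ZMod 2) else 0)).sum
      = (if v = a then 1 else 0) + (if v = b then 1 else 0) := by
  induction p with
  | nil => simp [CharTwo.add_self_eq_zero]
  | cons h p ih =>
      simp only [SimpleGraph.Walk.edges_cons, List.map_cons, List.sum_cons, ih,
        ind_pair h.ne]
      have key : ∀ A B C : ZMod 2, A + C + (C + B) = A + B := by decide
      exact key _ _ _

lemma sum_edge_ind (l : List (Sym2 V)) (hl : l.Nodup) (hsub : ∀ e ∈ l, e ∈ G.edgeSet)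
    (g : Sym2 V → ZMod 2) :
    (∑ e : G.edgeSet, if (e : Sym2 V) ∈ l then g e else 0) = (l.map g).sum := by
  rw [Finset.sum_set_coe (f := fun e => if e ∈ l then g e else 0)]
  rw [← List.sum_toFinset _ hl]
  rw [← Finset.sum_subset
      (fun e he => Set.mem_toFinset.2 (hsub e (List.mem_toFinset.1 he)))
      (fun e _ hnot => if_neg (fun hmem => hnot (List.mem_toFinset.2 hmem)))]
  exact Finset.sum_congr rfl fun e he => if_pos (List.mem_toFinset.1 he)

lemma B_apply (f : V → ZMod 2) {u w : V} (h : G.Adj u w) :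
    (M G)ᵀ.mulVecLin f ⟨s(u, w), h⟩ = f u + f w := by
  simp only [mulVecLin_apply, mulVec, dotProduct, transpose_apply, M]
  have h1 : ∀ v, (if v ∈ s(u, w) then (1 : ZMod 2) else 0) * f v
      = (if v = u then f v else 0) + (if v = w then f v else 0) := by
    intro v
    rw [ind_pair h.ne v, add_mul]
    simp [ite_mul]
  rw [Finset.sum_congr rfl fun v _ => h1 v, Finset.sum_add_distrib]
  simp

lemma finrank_ker_Mt :
    Module.finrank (ZMod 2) (LinearMap.ker (M G)ᵀ.mulVecLin)
      = Nat.card G.ConnectedComponent := by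
  classical
  let L : (G.ConnectedComponent → ZMod 2) →ₗ[ZMod 2] (V → ZMod 2) :=
    { toFun := fun f v => f (G.connectedComponentMk v)
      map_add' := fun _ _ => rfl
      map_smul' := fun _ _ => rfl }
  have hrange : LinearMap.range L = LinearMap.ker (M G)ᵀ.mulVecLin := by
    apply le_antisymm
    · rintro _ ⟨f, rfl⟩
      rw [LinearMap.mem_ker]
      funext e
      obtain ⟨e, he⟩ := e
      induction e using Sym2.ind with
      | _ u w =>
        have hadj : G.Adj u w := he
        show (M G)ᵀ.mulVecLin (L f) ⟨s(u, w), hadj⟩ = 0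
        rw [B_apply G _ hadj]
        show f (G.connectedComponentMk u) + f (G.connectedComponentMk w) = 0
        rw [SimpleGraph.ConnectedComponent.connectedComponentMk_eq_of_adj hadj]
        exact CharTwo.add_self_eq_zero _
    · intro x hx
      rw [LinearMap.mem_ker] at hx
      have hadj : ∀ u w, G.Adj u w → x u = x w := by
        intro u w h
        have h0 : (M G)ᵀ.mulVecLin x ⟨s(u, w), h⟩ = 0 := by rw [hx]; rfl
        rw [B_apply G x h] at h0
        rw [CharTwo.add_eq_iff_eq_add, zero_add] at h0
        exact h0
      have hwalkAll : ∀ (u w : V) (_ : G.Walk u w), x u = x w := by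
        intro u w p
        induction p with
        | nil => rfl
        | cons h _ ih => exact (hadj _ _ h).trans ih
      exact ⟨SimpleGraph.ConnectedComponent.lift x (fun u w p _ => hwalkAll u w p), rfl⟩
  have hinj : Function.Injective L := by
    intro f g h
    funext c
    induction c using SimpleGraph.ConnectedComponent.ind with
    | _ v => exact congrFun h v
  rw [← hrange, LinearMap.finrank_range_of_inj hinj, Module.finrank_pi,
    Nat.card_eq_fintype_card]

lemma M_mul_Mt (hodd : ∀ v, Odd (G.degree v)) :
    M G * (M G)ᵀ = G.adjMatrix (ZMod 2) + 1 := by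
  ext u v
  rw [Matrix.mul_apply]
  by_cases huv : u = v
  · subst huv
    have h1 : ∀ e : G.edgeSet, M G u e * (M G)ᵀ e u
        = if u ∈ (e : Sym2 V) then (1 : ZMod 2) else 0 := by
      intro e
      simp only [M, transpose_apply]
      by_cases h : u ∈ (e : Sym2 V) <;> simp [h]
    rw [Finset.sum_congr rfl fun e _ => h1 e, Finset.sum_boole]
    have hcard : (Finset.univ.filter (fun e : G.edgeSet => u ∈ (e : Sym2 V))).card
        = G.degree u := by
      rw [← Fintype.card_subtype]
      rw [← SimpleGraph.card_incidenceSet_eq_degree G u]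
      apply Fintype.card_congr
      exact (Equiv.subtypeSubtypeEquivSubtypeInter (· ∈ G.edgeSet) (u ∈ ·)).trans
        (Equiv.subtypeEquivRight fun e => by
          simp [SimpleGraph.incidenceSet, Set.mem_sep_iff])
    rw [hcard]
    obtain ⟨k, hk⟩ := hodd u
    have : ((2 * k + 1 : ℕ) : ZMod 2) = 1 := by
      push_cast
      have h2 : (2 : ZMod 2) = 0 := by decide
      rw [h2]; ring
    rw [hk, this]
    simp [Matrix.one_apply_eq]
  · have h1 : ∀ e : G.edgeSet, M G u e * (M G)ᵀ e v
        = if (e : Sym2 V) = s(u, v) then (1 : ZMod 2) else 0 := by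
      intro e
      simp only [M, transpose_apply]
      by_cases hu : u ∈ (e : Sym2 V) <;> by_cases hv : v ∈ (e : Sym2 V) <;>
        simp [hu, hv, ← Sym2.mem_and_mem_iff huv]
    rw [Finset.sum_congr rfl fun e _ => h1 e]
    by_cases hadj : G.Adj u v
    · have : ∀ e : G.edgeSet, ((e : Sym2 V) = s(u, v)) = (e = ⟨s(u, v), hadj⟩) := by
        intro e; rw [eq_iff_iff]
        exact ⟨fun h => Subtype.ext h, fun h => by rw [h]⟩
      simp only [this]
      rw [Finset.sum_ite_eq' Finset.univ (⟨s(u, v), hadj⟩ : G.edgeSet) (fun _ => 1)]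
      simp [hadj, Matrix.one_apply_ne huv]
    · have : ∀ e : G.edgeSet, (if (e : Sym2 V) = s(u, v) then (1 : ZMod 2) else 0) = 0 := by
        intro e
        rw [if_neg]
        intro h
        exact hadj (G.mem_edgeSet.1 (h ▸ e.2))
      rw [Finset.sum_congr rfl fun e _ => this e]
      simp [hadj, Matrix.one_apply_ne huv]

end TwoNullityAux

open TwoNullityAux in
set_option maxHeartbeats 1000000 in
set_option synthInstance.maxHeartbeats 400000 in
/-- If every vertex of `G` has odd degree and `G` has `t` pairwise
edge-disjoint odd cycles, then `2-η_{Ā+I}(G) + t + v(G) ≤ e(G) + 2·c(G)`. -/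
theorem two_nullity_adj_add_one_odd_graph_le {V : Type*} [Fintype V] [DecidableEq V]
    (G : SimpleGraph V) [DecidableRel G.Adj]
    (hodd' : ∀ v, Odd (G.degree v))
    (t : ℕ) (x : Fin t → V) (w : ∀ i, G.Walk (x i) (x i))
    (hcyc : ∀ i, (w i).IsCycle) (hodd : ∀ i, Odd (w i).length)
    (hdisj : ∀ i j, i ≠ j → ∀ e, e ∈ (w i).edges → e ∉ (w j).edges) :
    nullity2 (G.adjMatrix (ZMod 2) + 1) + t + Fintype.card V
      ≤ Nat.card G.edgeSet + 2 * Nat.card G.ConnectedComponent := by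
  classical
  -- the cycle matrix
  set Z : Matrix (Fin t) G.edgeSet (ZMod 2) :=
    fun i e => if (e : Sym2 V) ∈ (w i).edges then 1 else 0 with hZdef
  have hnodup : ∀ i, ((w i).edges).Nodup := fun i => (hcyc i).edges_nodup
  have hsub : ∀ i, ∀ e ∈ (w i).edges, e ∈ G.edgeSet :=
    fun i e he => (w i).edges_subset_edgeSet he
  -- M * Zᵀ = 0
  have hMZ : M G * Zᵀ = 0 := by
    ext v i
    rw [Matrix.mul_apply]
    have h1 : ∀ e : G.edgeSet, M G v e * Zᵀ e i
        = if (e : Sym2 V) ∈ (w i).edges then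
            (if v ∈ (e : Sym2 V) then (1 : ZMod 2) else 0) else 0 := by
      intro e
      simp only [M, transpose_apply]; simp only [hZdef]
      by_cases h : (e : Sym2 V) ∈ (w i).edges <;> simp [h]
    rw [Finset.sum_congr rfl fun e _ => h1 e,
      sum_edge_ind G _ (hnodup i) (hsub i) (fun e => if v ∈ e then 1 else 0),
      walk_sum G (w i) v]
    simp [CharTwo.add_self_eq_zero]
  -- Z * Zᵀ = 1
  have hZZ : Z * Zᵀ = 1 := by
    ext i j
    rw [Matrix.mul_apply]
    by_cases hij : i = j
    · subst hij
      have h1 : ∀ e : G.edgeSet, Z i e * Zᵀ e i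
          = if (e : Sym2 V) ∈ (w i).edges then (1 : ZMod 2) else 0 := by
        intro e
        simp only [transpose_apply]; simp only [hZdef]
        by_cases h : (e : Sym2 V) ∈ (w i).edges <;> simp [h]
      rw [Finset.sum_congr rfl fun e _ => h1 e,
        sum_edge_ind G _ (hnodup i) (hsub i) (fun _ => 1)]
      have hlen : (((w i).edges).map (fun _ => (1 : ZMod 2))).sum
          = ((w i).length : ZMod 2) := by
        rw [List.map_const', List.sum_replicate, nsmul_eq_mul, mul_one,
          SimpleGraph.Walk.length_edges]
      rw [hlen]
      obtain ⟨k, hk⟩ := hodd i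
      have h2 : (2 : ZMod 2) = 0 := by decide
      rw [hk]
      push_cast
      rw [h2]
      simp [Matrix.one_apply_eq]
    · have h1 : ∀ e ∈ Finset.univ, Z i e * Zᵀ e j = (0 : ZMod 2) := by
        intro e _
        simp only [transpose_apply]; simp only [hZdef]
        by_cases h : (e : Sym2 V) ∈ (w i).edges
        · rw [if_neg (hdisj i j hij _ h), mul_zero]
        · rw [if_neg h, zero_mul]
      rw [Finset.sum_congr rfl h1]
      simp [Matrix.one_apply_ne hij]
  -- main linear algebra
  have hMM := M_mul_Mt G hodd'
  set Mlin := (M G).mulVecLin with hMlin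
  set B := (M G)ᵀ.mulVecLin with hB
  set Zl := Z.mulVecLin with hZl
  have hN : (G.adjMatrix (ZMod 2) + 1).mulVecLin = Mlin ∘ₗ B := by
    rw [← hMM, Matrix.mulVecLin_mul]
  set K := LinearMap.ker ((G.adjMatrix (ZMod 2) + 1).mulVecLin) with hK
  set W : Submodule (ZMod 2) (G.edgeSet → ZMod 2) :=
    LinearMap.ker Mlin ⊓ LinearMap.ker Zl with hW
  -- Ψ : K → (edges → F2)
  set Ψ : K →ₗ[ZMod 2] (G.edgeSet → ZMod 2) := B ∘ₗ K.subtype with hΨ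
  have hkerB_le : LinearMap.ker B ≤ K := by
    intro y hy
    rw [LinearMap.mem_ker] at hy ⊢
    rw [hN]
    simp [LinearMap.comp_apply, hy]
  have hker_psi : Module.finrank (ZMod 2) (LinearMap.ker Ψ)
      = Nat.card G.ConnectedComponent := by
    rw [hΨ, LinearMap.ker_comp]
    rw [(Submodule.comapSubtypeEquivOfLe hkerB_le).finrank_eq]
    exact finrank_ker_Mt G
  have hrange_psi : LinearMap.range Ψ ≤ W := by
    rintro _ ⟨⟨y, hy⟩, rfl⟩
    rw [hK, LinearMap.mem_ker, hN] at hy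
    refine Submodule.mem_inf.2 ⟨?_, ?_⟩
    · show Mlin (B y) = 0
      exact hy
    · show Zl (B y) = 0
      have : Zl ∘ₗ B = (Z * (M G)ᵀ).mulVecLin := by
        rw [hZl, hB, Matrix.mulVecLin_mul]
      have hZMt : Z * (M G)ᵀ = 0 := by
        have := congrArg Matrix.transpose hMZ
        rwa [Matrix.transpose_mul, Matrix.transpose_transpose, Matrix.transpose_zero] at this
      calc Zl (B y) = (Zl ∘ₗ B) y := rfl
        _ = 0 := by rw [this, hZMt]; simp
  -- dimension bound for W
  have hW_bound : Module.finrank (ZMod 2) W + t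
      ≤ Module.finrank (ZMod 2) (LinearMap.ker Mlin) := by
    set ι : W →ₗ[ZMod 2] LinearMap.ker Mlin := Submodule.inclusion inf_le_left with hι
    have hζmem : ∀ a : Fin t → ZMod 2, Zᵀ.mulVecLin a ∈ LinearMap.ker Mlin := by
      intro a
      rw [LinearMap.mem_ker]
      have : Mlin ∘ₗ Zᵀ.mulVecLin = ((M G) * Zᵀ).mulVecLin := by
        rw [hMlin, Matrix.mulVecLin_mul]
      calc Mlin (Zᵀ.mulVecLin a) = (Mlin ∘ₗ Zᵀ.mulVecLin) a := rfl
        _ = 0 := by rw [this, hMZ]; simp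
    set ζ : (Fin t → ZMod 2) →ₗ[ZMod 2] LinearMap.ker Mlin :=
      LinearMap.codRestrict _ Zᵀ.mulVecLin hζmem with hζ
    set Θ : (W × (Fin t → ZMod 2)) →ₗ[ZMod 2] LinearMap.ker Mlin := ι.coprod ζ with hΘ
    have hinj : Function.Injective Θ := by
      rw [← LinearMap.ker_eq_bot]
      rw [Submodule.eq_bot_iff]
      rintro ⟨y, a⟩ hya
      rw [LinearMap.mem_ker] at hya
      have h0 : (y : G.edgeSet → ZMod 2) + Zᵀ.mulVecLin a = 0 := Subtype.ext_iff.mp hya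
      have ha : a = 0 := by
        have h2 := congrArg Zl h0
        rw [map_add, map_zero] at h2
        have hy0 : Zl (y : G.edgeSet → ZMod 2) = 0 := y.2.2
        have h3 : Zl (Zᵀ.mulVecLin a) = a := by
          have : Zl ∘ₗ Zᵀ.mulVecLin = (Z * Zᵀ).mulVecLin := by
            rw [hZl, Matrix.mulVecLin_mul]
          calc Zl (Zᵀ.mulVecLin a) = (Zl ∘ₗ Zᵀ.mulVecLin) a := rfl
            _ = a := by rw [this, hZZ]; simp
        rw [hy0, h3, zero_add] at h2
        exact h2
      have hy : y = 0 := by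
        rw [ha, map_zero, add_zero] at h0
        exact Subtype.ext h0
      rw [Prod.mk.injEq] at *
      exact ⟨hy, ha⟩
    have := LinearMap.finrank_le_finrank_of_injective hinj
    rwa [Module.finrank_prod, Module.finrank_fin_fun] at this
  -- rank-nullity computations
  have hrn1 : Module.finrank (ZMod 2) (LinearMap.range Ψ)
      + Module.finrank (ZMod 2) (LinearMap.ker Ψ) = Module.finrank (ZMod 2) K :=
    LinearMap.finrank_range_add_finrank_ker Ψ
  have hrange_le : Module.finrank (ZMod 2) (LinearMap.range Ψ)
      ≤ Module.finrank (ZMod 2) W := Submodule.finrank_mono hrange_psi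
  have hrn2 : Module.finrank (ZMod 2) (LinearMap.range Mlin)
      + Module.finrank (ZMod 2) (LinearMap.ker Mlin)
      = Fintype.card G.edgeSet := by
    rw [LinearMap.finrank_range_add_finrank_ker Mlin, Module.finrank_pi]
  have hrn3 : Module.finrank (ZMod 2) (LinearMap.range B)
      + Module.finrank (ZMod 2) (LinearMap.ker B) = Fintype.card V := by
    rw [LinearMap.finrank_range_add_finrank_ker B, Module.finrank_pi]
  have hrank_eq : Module.finrank (ZMod 2) (LinearMap.range Mlin)
      = Module.finrank (ZMod 2) (LinearMap.range B) := by
    have := Matrix.rank_transpose (M G)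
    rw [Matrix.rank, Matrix.rank] at this
    rw [hMlin, hB]
    exact this.symm
  have hkerB : Module.finrank (ZMod 2) (LinearMap.ker B)
      = Nat.card G.ConnectedComponent := finrank_ker_Mt G
  have hcardE : Nat.card G.edgeSet = Fintype.card G.edgeSet := Nat.card_eq_fintype_card
  have hnull : nullity2 (G.adjMatrix (ZMod 2) + 1) = Module.finrank (ZMod 2) K := rfl
  omega
end

section
/- Let G be a simple graph on a finite vertex set and let c₁, …, c_t be a family of t pairwise edge-disjoint odd cycles of G. Then the 2-nullity of Ā(G) + I over 𝔽₂ satisfies 2-η_{Ā+I}(G) + t + v(G) ≤ e(G) + v_e(G) + 2·c(G). -/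
open Matrix Finset

/-- The number of even degree vertices of `G`. -/
noncomputable def evenVertCount {V : Type*} [Fintype V] (G : SimpleGraph V)
    [DecidableRel G.Adj] : ℕ :=
  Nat.card {v : V // Even (G.degree v)}

namespace TwoNullityAux

lemma zmod2_add_self (a : ZMod 2) : a + a = 0 := by revert a; decide

lemma zmod2_add_eq_zero {a b : ZMod 2} (h : a + b = 0) : a = b := by
  revert a b; decide

variable {V : Type*} [Fintype V] [DecidableEq V] (G : SimpleGraph V) [DecidableRel G.Adj]

/-- The combined matrix `[incidence | even-degree selector]` over 𝔽₂. -/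
def Nmat : Matrix V ({e : Sym2 V // e ∈ G.edgeFinset} ⊕ {v : V // Even (G.degree v)}) (ZMod 2) :=
  fun v i => match i with
  | .inl e => if v ∈ e.val then 1 else 0
  | .inr u => if v = u.val then 1 else 0

lemma factorization : G.adjMatrix (ZMod 2) + 1 = Nmat G * (Nmat G)ᵀ := by
  ext u v
  rw [Matrix.mul_apply]
  rw [Fintype.sum_sum_type]
  simp only [Nmat, transpose_apply]
  by_cases huv : u = v
  · subst huv
    have h1 : (∑ a : {e : Sym2 V // e ∈ G.edgeFinset},
        (if u ∈ a.val then (1 : ZMod 2) else 0) * (if u ∈ a.val then 1 else 0))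
        = (G.degree u : ZMod 2) := by
      rw [Finset.sum_coe_sort G.edgeFinset
        (fun e => (if u ∈ e then (1 : ZMod 2) else 0) * (if u ∈ e then 1 else 0))]
      have : ∀ e ∈ G.edgeFinset, (if u ∈ e then (1 : ZMod 2) else 0) * (if u ∈ e then 1 else 0)
          = if u ∈ e then 1 else 0 := by intro e _; by_cases h : u ∈ e <;> simp [h]
      rw [Finset.sum_congr rfl this, Finset.sum_boole]
      rw [show G.edgeFinset.filter (fun e => u ∈ e) = G.incidenceFinset u from
        (SimpleGraph.incidenceFinset_eq_filter G u).symm,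
        SimpleGraph.card_incidenceFinset_eq_degree]
    have h2 : (∑ b : {v : V // Even (G.degree v)},
        (if u = b.val then (1 : ZMod 2) else 0) * (if u = b.val then 1 else 0))
        = if Even (G.degree u) then 1 else 0 := by
      by_cases h : Even (G.degree u)
      · rw [Fintype.sum_eq_single (⟨u, h⟩ : {v : V // Even (G.degree v)})]
        · simp [h]
        · intro b hb
          have : u ≠ b.val := fun he => hb (by ext; exact he.symm)
          simp [this]
      · rw [if_neg h]
        apply Finset.sum_eq_zero
        intro b _
        have : u ≠ b.val := fun he => h (he ▸ b.property)
        simp [this]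
    rw [h1, h2]
    have hdeg : ((G.degree u : ZMod 2)) + (if Even (G.degree u) then 1 else 0) = 1 := by
      by_cases h : Even (G.degree u)
      · rw [if_pos h]
        have : (G.degree u : ZMod 2) = 0 := by
          rw [ZMod.natCast_eq_zero_iff]
          exact h.two_dvd
        rw [this, zero_add]
      · rw [if_neg h]
        have : (G.degree u : ZMod 2) = 1 := by
          have h1 : G.degree u % 2 = 1 := Nat.odd_iff.mp (Nat.not_even_iff_odd.mp h)
          rw [← ZMod.natCast_mod (G.degree u) 2, h1, Nat.cast_one]
        rw [this]
        decide
    rw [hdeg]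
    simp [SimpleGraph.irrefl]
  · have h2 : (∑ b : {v : V // Even (G.degree v)},
        (if u = b.val then (1 : ZMod 2) else 0) * (if v = b.val then 1 else 0)) = 0 := by
      apply Finset.sum_eq_zero
      intro b _
      by_cases h : u = b.val
      · have : v ≠ b.val := fun hv => huv (h.trans hv.symm)
        simp [this]
      · simp [h]
    have h1 : (∑ a : {e : Sym2 V // e ∈ G.edgeFinset},
        (if u ∈ a.val then (1 : ZMod 2) else 0) * (if v ∈ a.val then 1 else 0))
        = if G.Adj u v then 1 else 0 := by
      rw [Finset.sum_coe_sort G.edgeFinset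
        (fun e => (if u ∈ e then (1 : ZMod 2) else 0) * (if v ∈ e then 1 else 0))]
      have : ∀ e ∈ G.edgeFinset, (if u ∈ e then (1 : ZMod 2) else 0) * (if v ∈ e then 1 else 0)
          = if e = s(u, v) then 1 else 0 := by
        intro e _
        by_cases h : e = s(u, v)
        · subst h
          simp [Sym2.mem_iff]
        · have : ¬ (u ∈ e ∧ v ∈ e) := fun hc => h ((Sym2.mem_and_mem_iff huv).mp hc)
          rcases not_and_or.mp this with h' | h' <;> simp [h', h]
      rw [Finset.sum_congr rfl this, Finset.sum_ite_eq' G.edgeFinset (s(u,v)) (fun _ => (1 : ZMod 2))]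
      simp [SimpleGraph.mem_edgeFinset]
    rw [h1, h2, add_zero]
    simp [huv]


/-- Edge-coordinate of `Nᵀ *ᵥ x`. -/
lemma L_apply_edge (x : V → ZMod 2) {u v : V} (huv : u ≠ v) (he : s(u,v) ∈ G.edgeFinset) :
    ((Nmat G)ᵀ.mulVecLin x) (Sum.inl ⟨s(u,v), he⟩) = x u + x v := by
  have key : ∀ v' : V, (Nmat G)ᵀ (Sum.inl ⟨s(u,v), he⟩) v' * x v'
      = if v' ∈ ({u, v} : Finset V) then x v' else 0 := by
    intro v'
    simp only [transpose_apply, Nmat, Finset.mem_insert, Finset.mem_singleton]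
    by_cases h : v' ∈ s(u,v)
    · rw [if_pos h, one_mul, if_pos (by simpa [Sym2.mem_iff] using h)]
    · rw [if_neg h, zero_mul, if_neg (by simpa [Sym2.mem_iff] using h)]
  rw [Matrix.mulVecLin_apply, mulVec, dotProduct]
  rw [Finset.sum_congr rfl (fun v' _ => key v'), Finset.sum_ite_mem,
    Finset.univ_inter, Finset.sum_pair huv]

lemma ker_L_constant {x : V → ZMod 2}
    (hx : x ∈ LinearMap.ker ((Nmat G)ᵀ.mulVecLin)) :
    ∀ u v, G.Reachable u v → x u = x v := by
  have step : ∀ u v, G.Adj u v → x u = x v := by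
    intro u v huv
    have he : s(u,v) ∈ G.edgeFinset := by
      rw [SimpleGraph.mem_edgeFinset, SimpleGraph.mem_edgeSet]; exact huv
    have h0 := congrFun (LinearMap.mem_ker.mp hx) (Sum.inl ⟨s(u,v), he⟩)
    rw [L_apply_edge G x huv.ne he] at h0
    exact zmod2_add_eq_zero h0
  intro u v hr
  obtain ⟨wlk⟩ := hr
  induction wlk with
  | nil => rfl
  | cons ha q ih => exact (step _ _ ha).trans ih

lemma finrank_ker_L_le :
    Module.finrank (ZMod 2) (LinearMap.ker ((Nmat G)ᵀ.mulVecLin))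
      ≤ Nat.card G.ConnectedComponent := by
  classical
  have : Finite G.ConnectedComponent := Quot.finite _
  have fint : Fintype G.ConnectedComponent := Fintype.ofFinite _
  let φ : LinearMap.ker ((Nmat G)ᵀ.mulVecLin) →ₗ[ZMod 2] (G.ConnectedComponent → ZMod 2) :=
    (LinearMap.funLeft (ZMod 2) (ZMod 2) (fun c => c.out)).comp (Submodule.subtype _)
  have hinj : Function.Injective φ := by
    rw [injective_iff_map_eq_zero]
    rintro ⟨x, hx⟩ h0
    have hconst := ker_L_constant G hx
    ext v
    have h1 : x v = x ((G.connectedComponentMk v).out) := by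
      apply hconst
      have h2 : G.connectedComponentMk ((G.connectedComponentMk v).out)
          = G.connectedComponentMk v := Quot.out_eq _
      exact (SimpleGraph.ConnectedComponent.exact h2).symm
    have h3 : x ((G.connectedComponentMk v).out) = 0 := congrFun h0 (G.connectedComponentMk v)
    simpa using h1.trans h3
  have hle := LinearMap.finrank_le_finrank_of_injective hinj
  rwa [Module.finrank_fintype_fun_eq_card, ← Nat.card_eq_fintype_card] at hle

/-- Incidence parity of the edges of a walk at a vertex. -/
lemma walk_edge_sum {a b : V} (p : G.Walk a b) (v : V) :
    ((p.edges).map (fun e => if v ∈ e then (1 : ZMod 2) else 0)).sum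
      = (if v = a then 1 else 0) + (if v = b then 1 else 0) := by
  induction p with
  | nil => rw [SimpleGraph.Walk.edges_nil, List.map_nil, List.sum_nil, zmod2_add_self]
  | @cons a c b ha q ih =>
    rw [SimpleGraph.Walk.edges_cons, List.map_cons, List.sum_cons, ih]
    have hac : a ≠ c := ha.ne
    have hmem : (if v ∈ s(a,c) then (1 : ZMod 2) else 0)
        = (if v = a then 1 else 0) + (if v = c then 1 else 0) := by
      by_cases h1 : v = a
      · subst h1; simp [Sym2.mem_iff, hac]
      · by_cases h2 : v = c
        · subst h2; simp [Sym2.mem_iff, h1]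
        · simp [Sym2.mem_iff, h1, h2]
    rw [hmem]
    have key : ∀ x y z : ZMod 2, (x + y) + (y + z) = x + z := by decide
    exact key _ _ _

/-- Along a walk every edge of which sees a jump of `g`, the endpoints differ by `length • g`. -/
lemma walk_alt (x : V → ZMod 2) (g : ZMod 2) {a b : V} (p : G.Walk a b)
    (h : ∀ u v', s(u,v') ∈ p.edges → x u + x v' = g) :
    x a + x b = p.length • g := by
  induction p with
  | nil => rw [SimpleGraph.Walk.length_nil, zero_smul, zmod2_add_self]
  | @cons a c b ha q ih =>
    have h1 : x a + x c = g := h a c (by rw [SimpleGraph.Walk.edges_cons]; exact List.mem_cons_self)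
    have h2 : x c + x b = q.length • g :=
      ih (fun u v' he => h u v' (by rw [SimpleGraph.Walk.edges_cons]; exact List.mem_cons_of_mem _ he))
    have key : ∀ x y z : ZMod 2, (x + y) + (y + z) = x + z := by decide
    rw [SimpleGraph.Walk.length_cons, succ_nsmul, ← h2, ← h1, add_comm (x c + x b)]
    exact (key _ _ _).symm

/-- General fact: `dim ker (K ∘ L) ≤ dim ker L + dim (range L ⊓ ker K)`. -/
lemma finrank_ker_comp_le {R M₁ M₂ M₃ : Type*} [Field R]
    [AddCommGroup M₁] [Module R M₁] [AddCommGroup M₂] [Module R M₂]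
    [AddCommGroup M₃] [Module R M₃] [FiniteDimensional R M₁] [FiniteDimensional R M₂]
    (L : M₁ →ₗ[R] M₂) (K : M₂ →ₗ[R] M₃) :
    Module.finrank R (LinearMap.ker (K ∘ₗ L))
      ≤ Module.finrank R (LinearMap.ker L)
        + Module.finrank R (LinearMap.range L ⊓ LinearMap.ker K : Submodule R M₂) := by
  set ψ : LinearMap.ker (K ∘ₗ L) →ₗ[R] M₂ := L ∘ₗ (Submodule.subtype _) with hψ
  have h1 := LinearMap.finrank_range_add_finrank_ker ψ
  have h2 : LinearMap.range ψ ≤ LinearMap.range L ⊓ LinearMap.ker K := by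
    rintro _ ⟨⟨y, hy⟩, rfl⟩
    refine ⟨⟨y, rfl⟩, ?_⟩
    simpa [ψ, LinearMap.mem_ker] using hy
  have h3 : Module.finrank R (LinearMap.ker ψ) ≤ Module.finrank R (LinearMap.ker L) := by
    have hmem : ∀ c : LinearMap.ker ψ, (c.val.val : M₁) ∈ LinearMap.ker L := by
      rintro ⟨⟨y, hy⟩, hc⟩
      simpa [ψ] using hc
    let χ : LinearMap.ker ψ →ₗ[R] LinearMap.ker L :=
      LinearMap.codRestrict _ ((Submodule.subtype _).comp (Submodule.subtype _)) hmem
    have hinj : Function.Injective χ := by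
      intro c1 c2 hcc
      have hv : (c1.val.val : M₁) = c2.val.val := congrArg (fun z : LinearMap.ker L => z.val) hcc
      exact Subtype.ext (Subtype.ext hv)
    exact LinearMap.finrank_le_finrank_of_injective hinj
  calc Module.finrank R (LinearMap.ker (K ∘ₗ L))
      = Module.finrank R (LinearMap.range ψ) + Module.finrank R (LinearMap.ker ψ) := h1.symm
    _ ≤ Module.finrank R (LinearMap.range L ⊓ LinearMap.ker K : Submodule R M₂)
        + Module.finrank R (LinearMap.ker L) :=
        Nat.add_le_add (Submodule.finrank_mono h2) h3
    _ = _ := Nat.add_comm _ _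

section Cycles

variable {t : ℕ} {xv : Fin t → V} (w : ∀ i, G.Walk (xv i) (xv i))

/-- The characteristic vector of the edge set of the `i`-th cycle. -/
def ycyc (i : Fin t) : ({e : Sym2 V // e ∈ G.edgeFinset} ⊕ {v : V // Even (G.degree v)}) → ZMod 2 :=
  fun j => match j with
  | .inl e => if e.val ∈ (w i).edges then 1 else 0
  | .inr _ => 0

lemma ycyc_edge_coord (i : Fin t) (e : {e : Sym2 V // e ∈ G.edgeFinset}) :
    ycyc G w i (Sum.inl e) = if e.val ∈ (w i).edges then 1 else 0 := rfl

lemma ycyc_mem_ker (hcyc : ∀ i, (w i).IsCycle) (i : Fin t) :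
    ycyc G w i ∈ LinearMap.ker ((Nmat G).mulVecLin) := by
  rw [LinearMap.mem_ker]
  ext v
  rw [Matrix.mulVecLin_apply, Pi.zero_apply, mulVec, dotProduct, Fintype.sum_sum_type]
  have h2 : ∑ b : {v : V // Even (G.degree v)},
      Nmat G v (Sum.inr b) * ycyc G w i (Sum.inr b) = 0 := by
    simp [ycyc]
  have h1 : ∑ e : {e : Sym2 V // e ∈ G.edgeFinset},
      Nmat G v (Sum.inl e) * ycyc G w i (Sum.inl e)
      = ((w i).edges.map (fun e => if v ∈ e then (1 : ZMod 2) else 0)).sum := by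
    simp only [Nmat, ycyc]
    rw [Finset.sum_coe_sort G.edgeFinset
      (fun e => (if v ∈ e then (1 : ZMod 2) else 0) * (if e ∈ (w i).edges then 1 else 0))]
    have hcongr : ∀ e ∈ G.edgeFinset,
        (if v ∈ e then (1 : ZMod 2) else 0) * (if e ∈ (w i).edges then 1 else 0)
        = if e ∈ (w i).edges then (if v ∈ e then (1 : ZMod 2) else 0) else 0 := by
      intro e _
      by_cases h : e ∈ (w i).edges <;> by_cases h' : v ∈ e <;> simp [h, h']
    rw [Finset.sum_congr rfl hcongr, ← Finset.sum_filter]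
    have hfil : G.edgeFinset.filter (fun e => e ∈ (w i).edges) = (w i).edges.toFinset := by
      ext e
      simp only [Finset.mem_filter, List.mem_toFinset, SimpleGraph.mem_edgeFinset]
      exact ⟨fun h => h.2, fun h => ⟨SimpleGraph.Walk.edges_subset_edgeSet _ h, h⟩⟩
    rw [hfil, List.sum_toFinset _ (hcyc i).edges_nodup]
  rw [h1, h2, add_zero, walk_edge_sum, zmod2_add_self]

lemma ycyc_linearIndependent (hcyc : ∀ i, (w i).IsCycle)
    (hdisj : ∀ i j, i ≠ j → ∀ e, e ∈ (w i).edges → e ∉ (w j).edges) :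
    LinearIndependent (ZMod 2) (ycyc G w) := by
  rw [Fintype.linearIndependent_iff]
  intro g h0 i
  have hlen : 0 < (w i).edges.length := by
    rw [SimpleGraph.Walk.length_edges]
    have := (hcyc i).three_le_length
    omega
  set e₀ : Sym2 V := (w i).edges.get ⟨0, hlen⟩ with he₀
  have he₀mem : e₀ ∈ (w i).edges := List.get_mem (w i).edges ⟨0, hlen⟩
  have he₀fin : e₀ ∈ G.edgeFinset :=
    SimpleGraph.mem_edgeFinset.mpr (SimpleGraph.Walk.edges_subset_edgeSet _ he₀mem)
  have hcoord := congrFun h0 (Sum.inl ⟨e₀, he₀fin⟩)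
  rw [Finset.sum_apply, Pi.zero_apply] at hcoord
  rw [Finset.sum_eq_single i] at hcoord
  · simpa [ycyc, he₀mem] using hcoord
  · intro j _ hji
    have : e₀ ∉ (w j).edges := hdisj i j hji.symm e₀ he₀mem
    simp [ycyc, this]
  · intro h; exact absurd (Finset.mem_univ i) h

lemma ycyc_span_inf_range (hcyc : ∀ i, (w i).IsCycle) (hodd : ∀ i, Odd (w i).length)
    (hdisj : ∀ i j, i ≠ j → ∀ e, e ∈ (w i).edges → e ∉ (w j).edges) :
    Submodule.span (ZMod 2) (Set.range (ycyc G w)) ⊓ LinearMap.range ((Nmat G)ᵀ.mulVecLin) = ⊥ := by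
  rw [eq_bot_iff]
  rintro z ⟨hz1, hz2⟩
  obtain ⟨g, hg⟩ := (Submodule.mem_span_range_iff_exists_fun (ZMod 2)).mp hz1
  obtain ⟨f, hf⟩ := hz2
  have hgz : ∀ i, g i = 0 := by
    intro i
    have halt : ∀ u v', s(u, v') ∈ (w i).edges → f u + f v' = g i := by
      intro u v' hmem
      have hadj : G.Adj u v' := SimpleGraph.Walk.adj_of_mem_edges _ hmem
      have he : s(u, v') ∈ G.edgeFinset :=
        SimpleGraph.mem_edgeFinset.mpr (SimpleGraph.Walk.edges_subset_edgeSet _ hmem)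
      have hL : z (Sum.inl ⟨s(u, v'), he⟩) = f u + f v' := by
        rw [← hf]; exact L_apply_edge G f hadj.ne he
      have hz : z (Sum.inl ⟨s(u, v'), he⟩) = g i := by
        rw [← hg, Finset.sum_apply]
        rw [Finset.sum_eq_single i]
        · simp [ycyc, hmem]
        · intro j _ hji
          have : s(u, v') ∉ (w j).edges := hdisj i j hji.symm _ hmem
          simp [ycyc, this]
        · intro h; exact absurd (Finset.mem_univ i) h
      rw [← hL, hz]
    have := walk_alt G f (g i) (w i) halt
    rw [zmod2_add_self] at this
    obtain ⟨k, hk⟩ := hodd i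
    rw [hk] at this
    have h2 : (2 * k + 1) • g i = g i := by
      rw [nsmul_eq_mul]
      push_cast
      have h20 : (2 : ZMod 2) = 0 := rfl
      rw [h20, zero_mul, zero_add, one_mul]
    rw [h2] at this
    exact this.symm
  have : z = 0 := by
    rw [← hg]
    apply Finset.sum_eq_zero
    intro i _
    rw [hgz i, zero_smul]
  simp [this]

end Cycles

end TwoNullityAux

/-- If `G` has `t` pairwise edge-disjoint odd cycles, then
`2-η_{Ā+I}(G) + t + v(G) ≤ e(G) + v_e(G) + 2·c(G)`. -/
theorem two_nullity_adj_add_one_le {V : Type*} [Fintype V] [DecidableEq V]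
    (G : SimpleGraph V) [DecidableRel G.Adj]
    (t : ℕ) (x : Fin t → V) (w : ∀ i, G.Walk (x i) (x i))
    (hcyc : ∀ i, (w i).IsCycle) (hodd : ∀ i, Odd (w i).length)
    (hdisj : ∀ i j, i ≠ j → ∀ e, e ∈ (w i).edges → e ∉ (w j).edges) :
    nullity2 (G.adjMatrix (ZMod 2) + 1) + t + Fintype.card V
      ≤ Nat.card G.edgeSet + evenVertCount G + 2 * Nat.card G.ConnectedComponent := by
  classical
  set K := (TwoNullityAux.Nmat G).mulVecLin with hK
  set L := ((TwoNullityAux.Nmat G)ᵀ).mulVecLin with hL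
  have hη : nullity2 (G.adjMatrix (ZMod 2) + 1)
      = Module.finrank (ZMod 2) (LinearMap.ker (K ∘ₗ L)) := by
    rw [nullity2, TwoNullityAux.factorization G, Matrix.mulVecLin_mul]
  set a := Module.finrank (ZMod 2) (LinearMap.ker L) with ha
  set b := Module.finrank (ZMod 2)
    (LinearMap.range L ⊓ LinearMap.ker K : Submodule (ZMod 2) _) with hb
  set kk := Module.finrank (ZMod 2) (LinearMap.ker K) with hkk
  set r := Module.finrank (ZMod 2) (LinearMap.range K) with hr
  set rL := Module.finrank (ZMod 2) (LinearMap.range L) with hrL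
  have h1 : nullity2 (G.adjMatrix (ZMod 2) + 1) ≤ a + b := by
    rw [hη]; exact TwoNullityAux.finrank_ker_comp_le L K
  have h2 : b + t ≤ kk := by
    set C := Submodule.span (ZMod 2) (Set.range (TwoNullityAux.ycyc G w)) with hC
    have hCk : C ≤ LinearMap.ker K := by
      rw [Submodule.span_le]
      rintro _ ⟨i, rfl⟩
      exact TwoNullityAux.ycyc_mem_ker G w hcyc i
    have hCrank : Module.finrank (ZMod 2) C = t := by
      rw [hC, finrank_span_eq_card (TwoNullityAux.ycyc_linearIndependent G w hcyc hdisj),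
        Fintype.card_fin]
    have hinf : (LinearMap.range L ⊓ LinearMap.ker K) ⊓ C = ⊥ := by
      rw [eq_bot_iff]
      intro z hz
      have hz' : z ∈ C ⊓ LinearMap.range L := ⟨hz.2, hz.1.1⟩
      rw [TwoNullityAux.ycyc_span_inf_range G w hcyc hodd hdisj] at hz'
      exact hz'
    have hq := Submodule.finrank_sup_add_finrank_inf_eq
      (LinearMap.range L ⊓ LinearMap.ker K) C
    rw [hinf, finrank_bot, add_zero, hCrank] at hq
    have hle : Module.finrank (ZMod 2) ↥((LinearMap.range L ⊓ LinearMap.ker K) ⊔ C) ≤ kk :=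
      Submodule.finrank_mono (sup_le inf_le_right hCk)
    omega
  have h3 : r + kk = Nat.card G.edgeSet + evenVertCount G := by
    have hrn := LinearMap.finrank_range_add_finrank_ker K
    rw [Module.finrank_fintype_fun_eq_card, Fintype.card_sum, Fintype.card_coe] at hrn
    rw [hrn, SimpleGraph.edgeFinset_card]
    rw [Nat.card_eq_fintype_card, evenVertCount, Nat.card_eq_fintype_card]
  have h4 : rL + a = Fintype.card V := by
    have hrn := LinearMap.finrank_range_add_finrank_ker L
    rwa [Module.finrank_fintype_fun_eq_card] at hrn
  have h5 : rL = r := by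
    have e1 : rL = ((TwoNullityAux.Nmat G)ᵀ).rank := rfl
    have e2 : r = (TwoNullityAux.Nmat G).rank := rfl
    rw [e1, e2, Matrix.rank_transpose]
  have h6 : a ≤ Nat.card G.ConnectedComponent := TwoNullityAux.finrank_ker_L_le G
  omega
end

section
/- Let G be a simple graph on a finite vertex set. Then the 2-nullity of P(G) + I over 𝔽₂ satisfies 2-η_{P+I}(G) + β(G) + c(G) ≤ v(G). -/
open Matrix

section Aux

variable {V : Type*} [Fintype V] [DecidableEq V] (G : SimpleGraph V) [DecidableRel G.Adj]

lemma incMul : incMat2 G * (incMat2 G)ᵀ = parityLap G := by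
  ext u w
  simp only [Matrix.mul_apply, incMat2, transpose_apply, Matrix.of_apply, ite_mul, one_mul,
    zero_mul, parityLap]
  rw [Finset.sum_set_coe (s := G.edgeSet)
    (f := fun e => if u ∈ e then if w ∈ e then (1:ZMod 2) else 0 else 0)]
  rw [show G.edgeSet.toFinset = G.edgeFinset from rfl]
  by_cases h : u = w
  · subst h
    have : ∀ e ∈ G.edgeFinset, (if u ∈ e then if u ∈ e then (1:ZMod 2) else 0 else 0)
        = if u ∈ e then 1 else 0 := fun e _ => by split <;> simp_all
    rw [Finset.sum_congr rfl this, Finset.sum_boole, ← SimpleGraph.incidenceFinset_eq_filter,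
      SimpleGraph.card_incidenceFinset_eq_degree, if_pos rfl]
  · simp only [if_neg h]
    have : ∀ e ∈ G.edgeFinset, (if u ∈ e then if w ∈ e then (1:ZMod 2) else 0 else 0)
        = if e = s(u, w) then 1 else 0 := by
      intro e _
      by_cases h1 : u ∈ e <;> by_cases h2 : w ∈ e <;>
        simp [h1, h2, ← Sym2.mem_and_mem_iff h]
    rw [Finset.sum_congr rfl this, Finset.sum_ite_eq' G.edgeFinset (s(u,w)) (fun _ => (1:ZMod 2))]
    simp [SimpleGraph.mem_edgeFinset]

lemma mulVec_transpose_apply (x : V → ZMod 2) (u w : V) (h : G.Adj u w)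
    (e : G.edgeSet) (he : (e : Sym2 V) = s(u, w)) :
    ((incMat2 G)ᵀ).mulVec x e = x u + x w := by
  have hne : u ≠ w := h.ne
  simp only [Matrix.mulVec, dotProduct, transpose_apply, incMat2, Matrix.of_apply, ite_mul,
    one_mul, zero_mul, he]
  rw [Finset.sum_ite, Finset.sum_const_zero, add_zero]
  have : Finset.univ.filter (fun v => v ∈ s(u, w)) = {u, w} := by
    ext v; simp [Sym2.mem_iff]
  rw [this, Finset.sum_pair hne]

lemma mem_kerT_iff (x : V → ZMod 2) :
    x ∈ LinearMap.ker ((incMat2 G)ᵀ).mulVecLin ↔ ∀ u w, G.Adj u w → x u = x w := by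
  constructor
  · intro hx u w h
    have he : s(u, w) ∈ G.edgeSet := h
    have := congrFun (LinearMap.mem_ker.mp hx) ⟨s(u, w), he⟩
    rw [Matrix.mulVecLin_apply] at this
    rw [mulVec_transpose_apply G x u w h ⟨s(u,w), he⟩ rfl] at this
    have := eq_neg_of_add_eq_zero_left this
    rwa [CharTwo.neg_eq] at this
  · intro hadj
    apply LinearMap.mem_ker.mpr
    funext e
    rw [Matrix.mulVecLin_apply]
    obtain ⟨e, hee⟩ := e
    induction e with
    | _ u w =>
      have h : G.Adj u w := hee
      rw [mulVec_transpose_apply G x u w h ⟨s(u,w), hee⟩ rfl, hadj u w h,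
        CharTwo.add_self_eq_zero]
      rfl

lemma kerT_eq : LinearMap.ker ((incMat2 G)ᵀ).mulVecLin
    = LinearMap.range (LinearMap.funLeft (ZMod 2) (ZMod 2) G.connectedComponentMk) := by
  ext x
  rw [mem_kerT_iff]
  constructor
  · intro h
    have hwalk : ∀ (v w : V) (p : G.Walk v w), x v = x w := by
      intro v w p
      induction p with
      | nil => rfl
      | cons ha _ ih => exact (h _ _ ha).trans ih
    refine ⟨SimpleGraph.ConnectedComponent.lift x (fun v w p _ => hwalk v w p), ?_⟩
    funext v
    rfl
  · rintro ⟨y, rfl⟩ u w h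
    simp only [LinearMap.funLeft_apply, Function.comp]
    rw [SimpleGraph.ConnectedComponent.connectedComponentMk_eq_of_adj h]

lemma finrank_kerT : Module.finrank (ZMod 2) (LinearMap.ker ((incMat2 G)ᵀ).mulVecLin)
    = Nat.card G.ConnectedComponent := by
  rw [kerT_eq, LinearMap.finrank_range_of_inj
    (LinearMap.funLeft_injective_of_surjective _ _ _ (fun c => c.exists_rep)),
    Module.finrank_fintype_fun_eq_card, Nat.card_eq_fintype_card]

end Aux

/-- `2-η_{P+I}(G) + β(G) + c(G) ≤ v(G)`. -/
theorem two_nullity_parityLap_add_one_le {V : Type*} [Fintype V] [DecidableEq V]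
    (G : SimpleGraph V) [DecidableRel G.Adj] :
    nullity2 (parityLap G + 1) + bicycleDim G + Nat.card G.ConnectedComponent
      ≤ Fintype.card V := by
  classical
  set T := ((incMat2 G)ᵀ).mulVecLin with hT
  set Nm := (incMat2 G).mulVecLin with hNm
  set S := LinearMap.range T with hS
  set B' : Submodule (ZMod 2) S := (LinearMap.ker Nm ⊓ S).comap S.subtype with hB'
  set K := LinearMap.ker ((parityLap G + 1) : Matrix V V (ZMod 2)).mulVecLin with hK
  have hPx : ∀ x ∈ K, Nm (T x) = x := by
    intro x hx
    have h0 : (parityLap G + 1).mulVec x = 0 := hx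
    rw [Matrix.add_mulVec, Matrix.one_mulVec] at h0
    have hx' : (parityLap G).mulVec x = x := by
      have h1 := eq_neg_of_add_eq_zero_left h0
      have h2 : -x = x := by funext v; exact CharTwo.neg_eq _
      rwa [h2] at h1
    have : Nm (T x) = ((incMat2 G * (incMat2 G)ᵀ).mulVecLin) x := by
      rw [Matrix.mulVecLin_mul]; rfl
    rw [this, incMul]
    exact hx'
  let f₁ : K →ₗ[ZMod 2] S :=
    LinearMap.codRestrict S (T ∘ₗ K.subtype) (fun x => LinearMap.mem_range_self _ _)
  let f : K →ₗ[ZMod 2] (S ⧸ B') := B'.mkQ.comp f₁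
  have hinj : Function.Injective f := by
    rw [← LinearMap.ker_eq_bot, LinearMap.ker_eq_bot']
    intro x hfx
    have h1 : f₁ x ∈ B' := (Submodule.Quotient.mk_eq_zero B').mp hfx
    have h2 : Nm (T (x : V → ZMod 2)) = 0 := (Submodule.mem_comap.mp h1).1
    rw [hPx x x.2] at h2
    exact Subtype.ext h2
  have hle : Module.finrank (ZMod 2) K ≤ Module.finrank (ZMod 2) (S ⧸ B') :=
    LinearMap.finrank_le_finrank_of_injective hinj
  have h2 : Module.finrank (ZMod 2) (S ⧸ B') + Module.finrank (ZMod 2) B'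
      = Module.finrank (ZMod 2) S := Submodule.finrank_quotient_add_finrank B'
  have h3 : Module.finrank (ZMod 2) B' = bicycleDim G :=
    (Submodule.comapSubtypeEquivOfLe inf_le_right).finrank_eq
  have h4 : Module.finrank (ZMod 2) S + Module.finrank (ZMod 2) (LinearMap.ker T)
      = Fintype.card V := by
    rw [LinearMap.finrank_range_add_finrank_ker T, Module.finrank_fintype_fun_eq_card]
  have h5 : Module.finrank (ZMod 2) (LinearMap.ker T) = Nat.card G.ConnectedComponent :=
    finrank_kerT G
  have hnull : nullity2 (parityLap G + 1) = Module.finrank (ZMod 2) K := rfl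
  omega
end

section
/- Let G be a simple graph on a finite vertex set and let λ be an odd integer. Then m_L(G, λ) + β(G) + c(G) ≤ v(G) and m_Q(G, λ) + β(G) + c(G) ≤ v(G). -/
open Matrix

/-- The multiplicity of `λ` for a real matrix `M`: the dimension of the kernel of `M - λ•I`. -/
noncomputable def multR {V : Type*} [Fintype V] [DecidableEq V]
    (M : Matrix V V ℝ) (lam : ℝ) : ℕ :=
  Module.finrank ℝ (LinearMap.ker (M - lam • (1 : Matrix V V ℝ)).mulVecLin)

/-- The diagonal degree matrix of `G` over ℝ. -/
def degMatR {V : Type*} [Fintype V] [DecidableEq V] (G : SimpleGraph V)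
    [DecidableRel G.Adj] : Matrix V V ℝ :=
  Matrix.diagonal fun v => (G.degree v : ℝ)

section Aux

/-- ℚ-linear independence of rational vectors implies ℝ-linear independence of their casts. -/
theorem li_real_of_rat {ι V : Type*} [Fintype ι] [Fintype V] (w : ι → V → ℚ)
    (h : LinearIndependent ℚ w) :
    LinearIndependent ℝ (fun i (v : V) => ((w i v : ℚ) : ℝ)) := by
  rw [Fintype.linearIndependent_iff] at h ⊢
  intro c hc
  set S := Submodule.span ℚ (Set.range c) with hS
  have hmem : ∀ i, c i ∈ S := fun i => Submodule.subset_span ⟨i, rfl⟩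
  let b := Module.Basis.ofVectorSpace ℚ S
  set g : ι → S := fun i => ⟨c i, hmem i⟩ with hg
  have key : ∀ k, ∀ i, (b.repr (g i)) k = 0 := by
    intro k
    apply h (fun i => (b.repr (g i)) k)
    funext v
    have h0 : (∑ i, (w i v) • g i) = 0 := by
      apply Subtype.ext
      push_cast [hg]
      have := congrFun hc v
      simpa [Rat.smul_def, mul_comm] using this
    have := congrArg (fun s => (b.repr s) k) h0
    simpa [mul_comm] using this
  intro i
  have : b.repr (g i) = 0 := Finsupp.ext fun k => key k i
  have : g i = 0 := b.repr.map_eq_zero_iff.mp (by simp [this])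
  simpa [hg, Subtype.ext_iff] using this

/-- If the mod-2 reductions of integer vectors are 𝔽₂-independent, the vectors are
ℚ-independent. -/
theorem li_rat_of_zmod2 {ι V : Type*} [Fintype ι] [Fintype V] (w : ι → V → ℤ)
    (h : LinearIndependent (ZMod 2) (fun i (v : V) => ((w i v : ℤ) : ZMod 2))) :
    LinearIndependent ℚ (fun i (v : V) => ((w i v : ℤ) : ℚ)) := by
  rw [Fintype.linearIndependent_iff] at h ⊢
  intro g hg
  by_contra hne
  push_neg at hne
  obtain ⟨i0, hi0⟩ := hne
  -- clear denominators
  set d : ℤ := ∏ i, ((g i).den : ℤ) with hd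
  have hdpos : 0 < d := Finset.prod_pos fun i _ => by exact_mod_cast (g i).den_pos
  have hdvd : ∀ i, ((g i).den : ℤ) ∣ d := fun i => Finset.dvd_prod_of_mem _ (Finset.mem_univ i)
  set a : ι → ℤ := fun i => (g i).num * (d / ((g i).den : ℤ)) with ha
  have hcast : ∀ i, (a i : ℚ) = g i * (d : ℚ) := by
    intro i
    obtain ⟨e, he⟩ := hdvd i
    have hden : ((g i).den : ℤ) ≠ 0 := by exact_mod_cast (g i).den_pos.ne'
    rw [ha]
    simp only [he, Int.mul_ediv_cancel_left _ hden]
    push_cast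
    rw [← mul_assoc, Rat.mul_den_eq_num]
  -- integer relation
  have hrel : ∀ v, ∑ i, a i * w i v = 0 := by
    intro v
    have := congrFun hg v
    simp only [Finset.sum_apply, Pi.smul_apply, smul_eq_mul, Pi.zero_apply] at this
    have h2 : ∑ i, (a i : ℚ) * (w i v : ℚ) = 0 := by
      calc ∑ i, (a i : ℚ) * (w i v : ℚ) = (∑ i, g i * (w i v : ℚ)) * d := by
            rw [Finset.sum_mul]; exact Finset.sum_congr rfl fun i _ => by rw [hcast]; ring
        _ = 0 := by rw [this, zero_mul]
    exact_mod_cast h2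
  have hane : a i0 ≠ 0 := by
    intro h0
    apply hi0
    have : (a i0 : ℚ) = 0 := by exact_mod_cast h0
    rw [hcast] at this
    rcases mul_eq_zero.mp this with h' | h'
    · exact h'
    · exact absurd h' (by exact_mod_cast hdpos.ne')
  -- find an odd-coefficient relation by dividing out powers of 2
  have main : ∀ n (aa : ι → ℤ), (∃ i, aa i ≠ 0) → (∀ v, ∑ i, aa i * w i v = 0) →
      (∑ i, (aa i).natAbs) ≤ n → False := by
    intro n
    induction n with
    | zero =>
      intro aa ⟨i, hi⟩ _ hle
      exact hi (Int.natAbs_eq_zero.mp (Nat.le_zero.mp (le_trans (Finset.single_le_sum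
        (f := fun i => (aa i).natAbs) (fun _ _ => Nat.zero_le _) (Finset.mem_univ i)) hle)))
    | succ n ih =>
      intro aa ⟨i1, hi1⟩ hrel hle
      by_cases hodd : ∃ i, ¬ (2 : ℤ) ∣ aa i
      · obtain ⟨i2, hi2⟩ := hodd
        have := h (fun i => ((aa i : ℤ) : ZMod 2)) ?_ i2
        · rw [ZMod.intCast_zmod_eq_zero_iff_dvd] at this
          exact hi2 (by exact_mod_cast this)
        · funext v
          have := hrel v
          have : ((∑ i, aa i * w i v : ℤ) : ZMod 2) = 0 := by rw [this]; simp
          push_cast at this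
          simpa [Finset.sum_apply] using this
      · push_neg at hodd
        set bb : ι → ℤ := fun i => aa i / 2 with hbb
        have hbbeq : ∀ i, aa i = 2 * bb i := fun i => (Int.mul_ediv_cancel' (hodd i)).symm
        apply ih bb ⟨i1, fun h0 => hi1 (by rw [hbbeq i1, h0, mul_zero])⟩
        · intro v
          have := hrel v
          have h2 : 2 * ∑ i, bb i * w i v = 0 := by
            rw [Finset.mul_sum]
            rw [← this]
            exact Finset.sum_congr rfl fun i _ => by rw [hbbeq i]; ring
          omega
        · have hsum : ∑ i, (aa i).natAbs = 2 * ∑ i, (bb i).natAbs := by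
            rw [Finset.mul_sum]
            exact Finset.sum_congr rfl fun i _ => by rw [hbbeq i, Int.natAbs_mul]; rfl
          have hpos : 1 ≤ (bb i1).natAbs := by
            rcases Nat.eq_zero_or_pos (bb i1).natAbs with h0 | h0
            · exact absurd (Int.natAbs_eq_zero.mp h0)
                (fun h0 => hi1 (by rw [hbbeq i1, h0, mul_zero]))
            · exact h0
          have : (bb i1).natAbs ≤ ∑ i, (bb i).natAbs :=
            Finset.single_le_sum (f := fun i => (bb i).natAbs) (fun _ _ => Nat.zero_le _)
              (Finset.mem_univ i1)
          omega
  exact main (∑ i, (a i).natAbs) a ⟨i0, hane⟩ hrel le_rfl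

/-- The 𝔽₂-rank of the reduction of an integer matrix is at most its real rank. -/
theorem rank_map2_le_rank_mapR {V : Type*} [Fintype V] [DecidableEq V] (B : Matrix V V ℤ) :
    (B.map (Int.cast : ℤ → ZMod 2)).rank ≤ (B.map (Int.cast : ℤ → ℝ)).rank := by
  classical
  set A2 := B.map (Int.cast : ℤ → ZMod 2)
  set AR := B.map (Int.cast : ℤ → ℝ)
  obtain ⟨t, hts, hsp, hli⟩ := exists_linearIndependent (ZMod 2) (Set.range A2ᵀ)
  have htfin : t.Finite := (Set.finite_range _).subset hts
  haveI : Fintype t := htfin.fintype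
  have hrank2 : A2.rank = Fintype.card t := by
    have hc := finrank_span_eq_card (R := ZMod 2) hli
    rw [Subtype.range_coe] at hc
    rw [Matrix.rank, Matrix.range_mulVecLin, show A2.col = A2ᵀ from rfl, ← hsp]
    exact hc
  have hchoice : ∀ x : t, ∃ j : V, A2ᵀ j = (x : V → ZMod 2) := fun x => hts x.2
  choose j hj using hchoice
  set wz : t → V → ℤ := fun x v => B v (j x) with hwz
  have h2 : LinearIndependent (ZMod 2) (fun x (v : V) => ((wz x v : ℤ) : ZMod 2)) := by
    have : (fun x (v : V) => ((wz x v : ℤ) : ZMod 2))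
        = (Subtype.val : t → (V → ZMod 2)) := by
      funext x v
      rw [← hj x]
      rfl
    rw [this]
    exact hli
  have hR : LinearIndependent ℝ (fun x (v : V) => ((wz x v : ℤ) : ℝ)) := by
    have := li_real_of_rat _ (li_rat_of_zmod2 wz h2)
    simpa using this
  have hsub : Submodule.span ℝ (Set.range (fun x (v : V) => ((wz x v : ℤ) : ℝ)))
      ≤ LinearMap.range AR.mulVecLin := by
    rw [Matrix.range_mulVecLin]
    apply Submodule.span_le.mpr
    rintro _ ⟨x, rfl⟩
    exact Submodule.subset_span ⟨j x, rfl⟩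
  calc A2.rank = Fintype.card t := hrank2
    _ = Module.finrank ℝ (Submodule.span ℝ (Set.range (fun x (v : V) => ((wz x v : ℤ) : ℝ)))) :=
        (finrank_span_eq_card hR).symm
    _ ≤ Module.finrank ℝ (LinearMap.range AR.mulVecLin) := Submodule.finrank_mono hsub
    _ = AR.rank := rfl

/-- The real nullity of an integer matrix is at most the 𝔽₂-nullity of its reduction. -/
theorem nullity_real_le {V : Type*} [Fintype V] [DecidableEq V] (B : Matrix V V ℤ) :
    Module.finrank ℝ (LinearMap.ker (B.map (Int.cast : ℤ → ℝ)).mulVecLin) ≤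
    Module.finrank (ZMod 2) (LinearMap.ker (B.map (Int.cast : ℤ → ZMod 2)).mulVecLin) := by
  have h1 := LinearMap.finrank_range_add_finrank_ker (B.map (Int.cast : ℤ → ℝ)).mulVecLin
  have h2 := LinearMap.finrank_range_add_finrank_ker (B.map (Int.cast : ℤ → ZMod 2)).mulVecLin
  rw [Module.finrank_pi] at h1 h2
  have h3 := rank_map2_le_rank_mapR B
  rw [Matrix.rank, Matrix.rank] at h3
  omega

variable {V : Type*} [Fintype V] [DecidableEq V] (G : SimpleGraph V) [DecidableRel G.Adj]

theorem incMat2_mul_transpose :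
    incMat2 G * (incMat2 G)ᵀ = Matrix.of (fun u v =>
      if u = v then (G.degree u : ZMod 2) else if G.Adj u v then 1 else 0) := by
  have key : incMat2 G * (incMat2 G)ᵀ
      = G.incMatrix (ZMod 2) * (G.incMatrix (ZMod 2))ᵀ := by
    ext u v
    rw [Matrix.mul_apply, Matrix.mul_apply]
    have hL : ∑ j : ↑G.edgeSet, incMat2 G u j * (incMat2 G)ᵀ j v
        = ∑ e ∈ G.edgeSet.toFinset,
            (if u ∈ e then (1 : ZMod 2) else 0) * (if v ∈ e then 1 else 0) :=
      Finset.sum_set_coe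
        (f := fun e => (if u ∈ e then (1 : ZMod 2) else 0) * (if v ∈ e then 1 else 0)) _
    rw [hL]
    refine (Finset.sum_subset_zero_on_sdiff (s₁ := G.edgeSet.toFinset)
        (s₂ := (Finset.univ : Finset (Sym2 V)))
        (f := fun e => (if u ∈ e then (1 : ZMod 2) else 0) * (if v ∈ e then 1 else 0))
        (g := fun e => G.incMatrix (ZMod 2) u e * (G.incMatrix (ZMod 2))ᵀ e v)
        (Finset.subset_univ _) ?_ ?_)
    · intro e he
      simp only [Finset.mem_sdiff, Set.mem_toFinset, Finset.mem_univ, true_and] at he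
      simp only [transpose_apply]
      have h1 : G.incMatrix (ZMod 2) u e = 0 :=
        G.incMatrix_of_notMem_incidenceSet (fun h => he h.1)
      rw [h1, zero_mul]
    · intro e he
      simp only [Set.mem_toFinset] at he
      simp only [transpose_apply, SimpleGraph.incMatrix_apply', SimpleGraph.incidenceSet]
      symm
      congr 1 <;> apply if_congr _ rfl rfl <;> simp [he]
  rw [key, SimpleGraph.incMatrix_mul_transpose]

private lemma sum_pair_aux (a b : V) (hab : a ≠ b) (f : V → ZMod 2) :
    ∑ v, (if v ∈ (s(a,b) : Sym2 V) then (1 : ZMod 2) else 0) * f v = f a + f b := by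
  simp only [Sym2.mem_iff, ite_mul, one_mul, zero_mul]
  rw [Finset.sum_ite, Finset.sum_const_zero, add_zero]
  have : Finset.univ.filter (fun v => v = a ∨ v = b) = {a, b} := by
    ext v; simp
  rw [this, Finset.sum_pair hab]

/-- Vectors constant on connected components lie in the kernel of `Nᵀ`. -/
theorem funLeft_mem_ker (y : G.ConnectedComponent → ZMod 2) :
    (fun v => y (G.connectedComponentMk v)) ∈ LinearMap.ker (incMat2 G)ᵀ.mulVecLin := by
  rw [LinearMap.mem_ker]
  funext e
  obtain ⟨e, he⟩ := e
  revert he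
  induction e using Sym2.ind with
  | _ a b =>
    intro he
    have hadj : G.Adj a b := he
    show (incMat2 G)ᵀ.mulVec (fun v => y (G.connectedComponentMk v)) ⟨s(a,b), he⟩ = 0
    have : (incMat2 G)ᵀ.mulVec (fun v => y (G.connectedComponentMk v)) ⟨s(a,b), he⟩
        = ∑ v, (if v ∈ (s(a,b) : Sym2 V) then (1 : ZMod 2) else 0)
            * y (G.connectedComponentMk v) := rfl
    rw [this, sum_pair_aux a b hadj.ne]
    have hcc : G.connectedComponentMk a = G.connectedComponentMk b :=
      SimpleGraph.ConnectedComponent.sound hadj.reachable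
    rw [hcc]
    exact CharTwo.add_self_eq_zero _

theorem f2_bound :
    Module.finrank (ZMod 2)
        (LinearMap.ker (incMat2 G * (incMat2 G)ᵀ + 1).mulVecLin)
      + bicycleDim G + Nat.card G.ConnectedComponent ≤ Fintype.card V := by
  classical
  set N := incMat2 G with hN
  set Q := N * Nᵀ with hQ
  set Kq := LinearMap.ker Q.mulVecLin with hKq
  set f : Kq →ₗ[ZMod 2] (G.edgeSet → ZMod 2) := Nᵀ.mulVecLin ∘ₗ Kq.subtype with hf
  have hmulQ : ∀ x : V → ZMod 2, Q.mulVecLin x = N.mulVecLin (Nᵀ.mulVecLin x) := by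
    intro x
    simp only [mulVecLin_apply, mulVec_mulVec, hQ]
  have hrange : LinearMap.range f
      = LinearMap.ker N.mulVecLin ⊓ LinearMap.range Nᵀ.mulVecLin := by
    ext z
    constructor
    · rintro ⟨⟨x, hx⟩, rfl⟩
      have hx' : Q.mulVecLin x = 0 := hx
      refine ⟨?_, ⟨x, rfl⟩⟩
      show N.mulVecLin (f ⟨x, hx⟩) = 0
      have : f ⟨x, hx⟩ = Nᵀ.mulVecLin x := rfl
      rw [this, ← hmulQ, hx']
    · rintro ⟨hz1, ⟨x, rfl⟩⟩
      have hx : x ∈ Kq := by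
        rw [hKq, LinearMap.mem_ker, hmulQ]
        exact hz1
      exact ⟨⟨x, hx⟩, rfl⟩
  have hker_ge : Nat.card G.ConnectedComponent
      ≤ Module.finrank (ZMod 2) (LinearMap.ker f) := by
    set xfun := LinearMap.funLeft (ZMod 2) (ZMod 2) G.connectedComponentMk with hxfun
    have h1 : ∀ y, xfun y ∈ Kq := by
      intro y
      rw [hKq, LinearMap.mem_ker, hmulQ]
      have : Nᵀ.mulVecLin (xfun y) = 0 := funLeft_mem_ker G y
      rw [this, map_zero]
    set φ₁ : (G.ConnectedComponent → ZMod 2) →ₗ[ZMod 2] Kq :=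
      xfun.codRestrict Kq h1 with hφ₁
    have h2 : ∀ y, φ₁ y ∈ LinearMap.ker f := by
      intro y
      rw [LinearMap.mem_ker]
      show Nᵀ.mulVecLin (xfun y) = 0
      exact funLeft_mem_ker G y
    set φ₂ : (G.ConnectedComponent → ZMod 2) →ₗ[ZMod 2] (LinearMap.ker f) :=
      φ₁.codRestrict (LinearMap.ker f) h2 with hφ₂
    have hinj : Function.Injective φ₂ := by
      intro y1 y2 hy
      have : xfun y1 = xfun y2 := congrArg Subtype.val (congrArg Subtype.val hy)
      exact LinearMap.funLeft_injective_of_surjective (ZMod 2) (ZMod 2) _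
        (fun c => c.exists_rep) this
    haveI : Fintype G.ConnectedComponent := Fintype.ofFinite _
    calc Nat.card G.ConnectedComponent = Fintype.card G.ConnectedComponent :=
          Nat.card_eq_fintype_card
      _ = Module.finrank (ZMod 2) (G.ConnectedComponent → ZMod 2) :=
          (Module.finrank_pi (ZMod 2)).symm
      _ ≤ Module.finrank (ZMod 2) (LinearMap.ker f) :=
          LinearMap.finrank_le_finrank_of_injective hinj
  have hrn : Module.finrank (ZMod 2) (LinearMap.range f)
      + Module.finrank (ZMod 2) (LinearMap.ker f)
      = Module.finrank (ZMod 2) Kq := LinearMap.finrank_range_add_finrank_ker f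
  have hKq_ge : bicycleDim G + Nat.card G.ConnectedComponent
      ≤ Module.finrank (ZMod 2) Kq := by
    rw [← hrn]
    have : bicycleDim G = Module.finrank (ZMod 2) (LinearMap.range f) := by
      rw [bicycleDim, hrange]
    omega
  have hle : LinearMap.ker (Q + 1).mulVecLin ≤ LinearMap.range Q.mulVecLin := by
    intro x hx
    rw [LinearMap.mem_ker, mulVecLin_apply, add_mulVec, one_mulVec] at hx
    refine ⟨-x, ?_⟩
    rw [mulVecLin_apply, mulVec_neg]
    exact (eq_neg_of_add_eq_zero_right hx).symm
  have hrnQ : Module.finrank (ZMod 2) (LinearMap.range Q.mulVecLin)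
      + Module.finrank (ZMod 2) Kq = Fintype.card V := by
    rw [hKq, LinearMap.finrank_range_add_finrank_ker, Module.finrank_pi]
  have hfin : Module.finrank (ZMod 2) (LinearMap.ker (Q + 1).mulVecLin)
      ≤ Module.finrank (ZMod 2) (LinearMap.range Q.mulVecLin) :=
    Submodule.finrank_mono hle
  omega

end Aux

/-- For an odd integer `λ`, both the Laplacian `L = D - A` and the
signless Laplacian `Q = D + A` satisfy `m(G,λ) + β(G) + c(G) ≤ v(G)`. -/
theorem mult_lap_and_signlessLap_odd_eigenvalue_le {V : Type*} [Fintype V] [DecidableEq V]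
    (G : SimpleGraph V) [DecidableRel G.Adj]
    (lam : ℤ) (hlam : Odd lam) :
    multR (degMatR G - G.adjMatrix ℝ) (lam : ℝ) + bicycleDim G + Nat.card G.ConnectedComponent
        ≤ Fintype.card V ∧
    multR (degMatR G + G.adjMatrix ℝ) (lam : ℝ) + bicycleDim G + Nat.card G.ConnectedComponent
        ≤ Fintype.card V := by
  classical
  have hlam2 : (lam : ZMod 2) = 1 := by
    obtain ⟨k, rfl⟩ := hlam
    push_cast
    have h2 : (2 : ZMod 2) = 0 := rfl
    rw [h2, zero_mul, zero_add]
  have key : ∀ (s : ℤ), (s = 1 ∨ s = -1) →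
      multR (degMatR G + (s : ℝ) • G.adjMatrix ℝ) (lam : ℝ)
        + bicycleDim G + Nat.card G.ConnectedComponent ≤ Fintype.card V := by
    intro s hs
    set B : Matrix V V ℤ :=
      Matrix.diagonal (fun v => (G.degree v : ℤ)) + s • G.adjMatrix ℤ
        - lam • (1 : Matrix V V ℤ) with hB
    have hBR : (degMatR G + (s : ℝ) • G.adjMatrix ℝ) - (lam : ℝ) • (1 : Matrix V V ℝ)
        = B.map (Int.cast : ℤ → ℝ) := by
      ext u v
      simp only [hB, Matrix.map_apply, Matrix.sub_apply, Matrix.add_apply, Matrix.smul_apply,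
        Matrix.diagonal_apply, Matrix.one_apply, SimpleGraph.adjMatrix_apply, degMatR,
        smul_eq_mul]
      push_cast [apply_ite (fun x : ℤ => (x : ℝ))]
      ring
    have hB2 : B.map (Int.cast : ℤ → ZMod 2) = incMat2 G * (incMat2 G)ᵀ + 1 := by
      rw [incMat2_mul_transpose]
      ext u v
      simp only [hB, Matrix.map_apply, Matrix.sub_apply, Matrix.add_apply, Matrix.smul_apply,
        Matrix.diagonal_apply, Matrix.one_apply, SimpleGraph.adjMatrix_apply, Matrix.of_apply,
        smul_eq_mul]
      push_cast [apply_ite (fun x : ℤ => (x : ZMod 2)), hlam2]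
      have hs2 : (s : ZMod 2) = 1 := by
        rcases hs with rfl | rfl <;> simp <;> rfl
      rw [hs2, one_mul]
      by_cases huv : u = v
      · subst huv
        simp only [if_true, SimpleGraph.irrefl, if_false, mul_zero, add_zero]
        rw [one_mul, CharTwo.sub_eq_add]
      · simp only [huv, if_false, mul_zero]
        rw [zero_add, sub_zero, add_zero]
    have h1 : multR (degMatR G + (s : ℝ) • G.adjMatrix ℝ) (lam : ℝ)
        = Module.finrank ℝ (LinearMap.ker (B.map (Int.cast : ℤ → ℝ)).mulVecLin) := by
      rw [multR, hBR]
    rw [h1]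
    have h2 := nullity_real_le B
    rw [hB2] at h2
    have h3 := f2_bound G
    omega
  constructor
  · have := key (-1) (Or.inr rfl)
    have hrw : degMatR G + ((-1 : ℤ) : ℝ) • G.adjMatrix ℝ = degMatR G - G.adjMatrix ℝ := by
      push_cast
      rw [neg_one_smul]
      exact (sub_eq_add_neg _ _).symm
    rwa [hrw] at this
  · have := key 1 (Or.inl rfl)
    have hrw : degMatR G + ((1 : ℤ) : ℝ) • G.adjMatrix ℝ = degMatR G + G.adjMatrix ℝ := by
      push_cast
      rw [one_smul]
    rwa [hrw] at this
end

section
/- Let G be a simple graph on a finite vertex set, and let a, b, p, q be odd integers with gcd(a,b) = 1, gcd(p,q) = 1, and 0 ≤ a/b ≤ 1. Then m_{A_{a/b}}(G, p/q) ≤ v_o(G). -/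
open Matrix

/-- The generalized adjacency matrix `A_α(G) = α·D(G) + (1-α)·A(G)` over ℝ. -/
noncomputable def genAdj {V : Type*} [Fintype V] [DecidableEq V] (G : SimpleGraph V)
    [DecidableRel G.Adj] (α : ℝ) : Matrix V V ℝ :=
  α • degMatR G + (1 - α) • G.adjMatrix ℝ

/-- The number of odd degree vertices of `G`. -/
noncomputable def oddVertCount {V : Type*} [Fintype V] (G : SimpleGraph V)
    [DecidableRel G.Adj] : ℕ :=
  Nat.card {v : V // Odd (G.degree v)}

def auxN {V : Type*} [Fintype V] [DecidableEq V] (G : SimpleGraph V)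
    [DecidableRel G.Adj] (a b p q : ℤ) : Matrix V V ℤ :=
  Matrix.of fun i j =>
    q * a * (if i = j then (G.degree i : ℤ) else 0)
      + q * (b - a) * (if G.Adj i j then 1 else 0)
      - p * b * (if i = j then 1 else 0)

lemma odd_cast_zmod2 {n : ℤ} (h : Odd n) : (n : ZMod 2) = 1 := by
  obtain ⟨k, rfl⟩ := h
  push_cast
  have : (2 : ZMod 2) = 0 := by decide
  ring_nf
  simp [this]

lemma even_cast_zmod2 {n : ℤ} (h : Even n) : (n : ZMod 2) = 0 := by
  obtain ⟨k, rfl⟩ := h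
  push_cast
  ring_nf
  have : (2 : ZMod 2) = 0 := by decide
  rw [mul_comm]
  simp [this]

/-- If `a, b, p, q` are odd integers with `gcd(a,b) = gcd(p,q) = 1` and
`0 ≤ a/b ≤ 1`, then `m_{A_{a/b}}(G, p/q) ≤ v_o(G)`. -/
theorem mult_genAdj_all_odd_le {V : Type*} [Fintype V] [DecidableEq V]
    (G : SimpleGraph V) [DecidableRel G.Adj]
    (a b p q : ℤ) (ha : Odd a) (hb : Odd b) (hp : Odd p) (hq : Odd q)
    (hab : Int.gcd a b = 1) (hpq : Int.gcd p q = 1)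
    (h0 : 0 ≤ (a : ℝ) / b) (h1 : (a : ℝ) / b ≤ 1) :
    multR (genAdj G ((a : ℝ) / b)) ((p : ℝ) / q) ≤ oddVertCount G := by
  classical
  have hbz : (b : ℝ) ≠ 0 := by
    exact_mod_cast fun h => (Int.not_odd_iff_even.mpr (by rw [h]; exact Even.zero)) hb
  have hqz : (q : ℝ) ≠ 0 := by
    exact_mod_cast fun h => (Int.not_odd_iff_even.mpr (by rw [h]; exact Even.zero)) hq
  set c : ℝ := (b : ℝ) * q with hc
  have hcz : c ≠ 0 := mul_ne_zero hbz hqz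
  set N : Matrix V V ℤ := auxN G a b p q with hN
  set Mr : Matrix V V ℝ := N.map (Int.cast : ℤ → ℝ) with hMr
  -- step 1: the shifted matrix is a scalar multiple of an integer matrix
  have hMat : genAdj G ((a : ℝ) / b) - ((p : ℝ) / q) • (1 : Matrix V V ℝ) = c⁻¹ • Mr := by
    ext i j
    simp only [hMr, hN, auxN, genAdj, degMatR, Matrix.sub_apply, Matrix.add_apply,
      Matrix.smul_apply, Matrix.diagonal_apply, SimpleGraph.adjMatrix_apply,
      Matrix.one_apply, Matrix.map_apply, Matrix.of_apply, smul_eq_mul]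
    split_ifs <;> push_cast <;> field_simp <;> ring
  -- step 2: the submatrix on even-degree vertices has odd determinant
  set S := {v : V // ¬ Odd (G.degree v)} with hS
  set B : Matrix S S ℤ := N.submatrix Subtype.val Subtype.val with hB
  have hB2 : B.map (Int.cast : ℤ → ZMod 2) = 1 := by
    ext u v
    have hqa : ((q * a : ℤ) : ZMod 2) = 1 := by
      push_cast [odd_cast_zmod2 hq, odd_cast_zmod2 ha]; ring
    have hba : ((q * (b - a) : ℤ) : ZMod 2) = 0 := by
      push_cast [odd_cast_zmod2 hq, odd_cast_zmod2 hb, odd_cast_zmod2 ha]; ring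
    have hpb : ((p * b : ℤ) : ZMod 2) = 1 := by
      push_cast [odd_cast_zmod2 hp, odd_cast_zmod2 hb]; ring
    simp only [hB, hN, auxN, Matrix.map_apply, Matrix.submatrix_apply, Matrix.of_apply,
      Matrix.one_apply]
    push_cast [hqa, hba, hpb]
    by_cases huv : u = v
    · subst huv
      have hdeg : ((G.degree (u : V) : ℕ) : ZMod 2) = 0 := by
        obtain ⟨k, hk⟩ := Nat.not_odd_iff_even.mp u.2
        rw [hk]
        push_cast
        have h2 : (2 : ZMod 2) = 0 := by decide
        rw [show (k : ZMod 2) + k = 2 * k by ring, h2, zero_mul]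
      simp [hdeg]
    · have : (u : V) ≠ (v : V) := fun h => huv (Subtype.ext h)
      simp [this, huv]
  have hdetB : ((B.det : ℤ) : ZMod 2) = 1 := by
    rw [show ((B.det : ℤ) : ZMod 2) = ((Int.castRingHom (ZMod 2)) B.det) from rfl,
      RingHom.map_det]
    rw [show (Int.castRingHom (ZMod 2)).mapMatrix B = B.map (Int.cast : ℤ → ZMod 2) from rfl]
    rw [hB2, Matrix.det_one]
  have hdetBz : B.det ≠ 0 := by
    intro h
    rw [h] at hdetB
    simp at hdetB
  have hdetBR : (Mr.submatrix (Subtype.val : S → V) Subtype.val).det ≠ 0 := by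
    have : Mr.submatrix (Subtype.val : S → V) Subtype.val = B.map (Int.cast : ℤ → ℝ) := rfl
    rw [this, show B.map (Int.cast : ℤ → ℝ) = (Int.castRingHom ℝ).mapMatrix B from rfl,
      ← RingHom.map_det]
    intro h
    rw [eq_intCast] at h
    exact hdetBz (by exact_mod_cast h)
  -- step 3: kernel injects into functions on odd-degree vertices
  set O := {v : V // Odd (G.degree v)} with hO
  set K := LinearMap.ker Mr.mulVecLin with hK
  let φ : K →ₗ[ℝ] (O → ℝ) :=
    { toFun := fun x u => x.1 u.1
      map_add' := fun x y => rfl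
      map_smul' := fun c x => rfl }
  have hinj : Function.Injective φ := by
    rw [← LinearMap.ker_eq_bot]
    apply LinearMap.ker_eq_bot'.mpr
    intro x hx
    have hx0 : ∀ u : O, x.1 u.1 = 0 := fun u => congrFun hx u
    have hker : Mr *ᵥ (x : V → ℝ) = 0 := by
      have h2 : x.1 ∈ LinearMap.ker Mr.mulVecLin := x.2
      rwa [LinearMap.mem_ker, Matrix.mulVecLin_apply] at h2
    set w : S → ℝ := fun v => x.1 v.1 with hw
    have hBw : (Mr.submatrix (Subtype.val : S → V) Subtype.val) *ᵥ w = 0 := by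
      funext u
      have hsplit := Fintype.sum_subtype_add_sum_subtype (fun v => Odd (G.degree v))
        (fun v => Mr u.1 v * x.1 v)
      have hOzero : ∑ v : O, Mr u.1 v.1 * x.1 v.1 = 0 := by
        apply Finset.sum_eq_zero
        intro v _
        rw [hx0 v, mul_zero]
      have htot : (∑ v : V, Mr u.1 v * x.1 v) = 0 := congrFun hker u.1
      have : (Mr.submatrix (Subtype.val : S → V) Subtype.val *ᵥ w) u
          = ∑ v : S, Mr u.1 v.1 * x.1 v.1 := rfl
      rw [this]
      have := hsplit.trans htot
      rw [hOzero, zero_add] at this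
      exact this.trans rfl
    have hw0 : w = 0 := Matrix.eq_zero_of_mulVec_eq_zero hdetBR hBw
    apply Subtype.ext
    funext v
    by_cases hv : Odd (G.degree v)
    · exact hx0 ⟨v, hv⟩
    · exact congrFun hw0 ⟨v, hv⟩
  -- step 4: put everything together
  have hmul : (genAdj G ((a : ℝ) / b) - ((p : ℝ) / q) • (1 : Matrix V V ℝ)).mulVecLin
      = c⁻¹ • Mr.mulVecLin := by
    rw [hMat]
    apply LinearMap.ext
    intro x
    simp [Matrix.mulVecLin_apply, Matrix.smul_mulVec]
  have hker_eq : LinearMap.ker (genAdj G ((a : ℝ) / b)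
      - ((p : ℝ) / q) • (1 : Matrix V V ℝ)).mulVecLin = K := by
    rw [hmul, LinearMap.ker_smul _ _ (inv_ne_zero hcz)]
  rw [multR, hker_eq]
  calc Module.finrank ℝ K ≤ Module.finrank ℝ (O → ℝ) :=
        LinearMap.finrank_le_finrank_of_injective hinj
    _ = Fintype.card O := Module.finrank_pi ℝ
    _ = oddVertCount G := by rw [oddVertCount, Nat.card_eq_fintype_card]
end

section
/- Let G be a simple graph on a finite vertex set, and let a, b, p, q be integers with gcd(a,b) = 1, gcd(p,q) = 1, 0 ≤ a/b ≤ 1, b odd, p odd, and q even. Then p/q is not an eigenvalue of A_{a/b}(G); that is, m_{A_{a/b}}(G, p/q) = 0, i.e., the kernel of A_{a/b}(G) − (p/q)·I over ℝ is trivial. -/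
open Matrix

lemma eval_charpoly' {n : Type*} [Fintype n] [DecidableEq n] {R : Type*} [CommRing R]
    (M : Matrix n n R) (x : R) :
    (M.charpoly).eval x = (x • (1 : Matrix n n R) - M).det := by
  rw [Matrix.charpoly, ← Polynomial.coe_evalRingHom, RingHom.map_det]
  congr 1
  ext i j
  by_cases h : i = j
  · subst h; simp [charmatrix_apply_eq, Matrix.one_apply]
  · simp [charmatrix_apply_ne _ _ _ h, Matrix.one_apply_ne h]

/-- If `gcd(a,b) = gcd(p,q) = 1`, `0 ≤ a/b ≤ 1`, `b` is odd, `p` is odd and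
`q` is even (so in particular `q ≠ 0`), then `p/q` is not an eigenvalue of `A_{a/b}(G)`:
`m_{A_{a/b}}(G, p/q) = 0`. -/
theorem mult_genAdj_q_even_eq_zero {V : Type*} [Fintype V] [DecidableEq V]
    (G : SimpleGraph V) [DecidableRel G.Adj]
    (a b p q : ℤ) (hb : Odd b) (hp : Odd p) (hq : Even q) (hq0 : q ≠ 0)
    (hab : Int.gcd a b = 1) (hpq : Int.gcd p q = 1)
    (h0 : 0 ≤ (a : ℝ) / b) (h1 : (a : ℝ) / b ≤ 1) :
    multR (genAdj G ((a : ℝ) / b)) ((p : ℝ) / q) = 0 := by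
  have hb0 : b ≠ 0 := by rintro rfl; exact (Int.not_odd_iff_even.mpr Even.zero) hb
  have hbQ : (b : ℚ) ≠ 0 := Int.cast_ne_zero.mpr hb0
  have hqQ : (q : ℚ) ≠ 0 := Int.cast_ne_zero.mpr hq0
  -- the rational matrix `N` whose real cast is `A_{a/b}(G) - (p/q)•1`
  set Nq : Matrix V V ℚ :=
    ((a : ℚ) / b) • (Matrix.diagonal fun v => (G.degree v : ℚ))
      + (1 - (a : ℚ) / b) • G.adjMatrix ℚ - ((p : ℚ) / q) • 1 with hNq
  have hmap : genAdj G ((a : ℝ) / b) - ((p : ℝ) / q) • (1 : Matrix V V ℝ)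
      = Nq.map ((↑) : ℚ → ℝ) := by
    ext i j
    simp only [Nq, Matrix.map_apply, Matrix.sub_apply, Matrix.add_apply, Matrix.smul_apply,
      genAdj, degMatR, Matrix.diagonal_apply, Matrix.one_apply, SimpleGraph.adjMatrix_apply,
      smul_eq_mul]
    split_ifs <;> push_cast <;> ring
  -- the integer matrix `a•D + (b-a)•A`
  set Mz : Matrix V V ℤ :=
    a • (Matrix.diagonal fun v => (G.degree v : ℤ)) + (b - a) • G.adjMatrix ℤ with hMz
  set x : ℚ := ((b : ℚ) * p) / q with hx
  have hscale : (b : ℚ) • Nq = Mz.map ((↑) : ℤ → ℚ) - x • 1 := by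
    ext i j
    simp only [Nq, Mz, x, Matrix.map_apply, Matrix.sub_apply, Matrix.add_apply,
      Matrix.smul_apply, Matrix.diagonal_apply, Matrix.one_apply,
      SimpleGraph.adjMatrix_apply, smul_eq_mul]
    split_ifs <;> push_cast <;> field_simp <;> ring
  -- the rational determinant is nonzero
  have hdetq : Nq.det ≠ 0 := by
    intro hdet
    have hd1 : (Mz.map ((↑) : ℤ → ℚ) - x • 1).det = 0 := by
      rw [← hscale, Matrix.det_smul, hdet, mul_zero]
    have hd2 : (x • (1 : Matrix V V ℚ) - Mz.map ((↑) : ℤ → ℚ)).det = 0 := by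
      rw [← neg_sub, Matrix.det_neg, hd1, mul_zero]
    have hint : IsIntegral ℤ x := by
      refine ⟨Mz.charpoly, Mz.charpoly_monic, ?_⟩
      have hcp : Mz.charpoly.map (algebraMap ℤ ℚ) = (Mz.map ((↑) : ℤ → ℚ)).charpoly := by
        exact (Matrix.charpoly_map Mz (Int.castRingHom ℚ)).symm
      show Polynomial.eval₂ (algebraMap ℤ ℚ) x Mz.charpoly = 0
      rw [Polynomial.eval₂_eq_eval_map, hcp, eval_charpoly', hd2]
    obtain ⟨n, hn⟩ := IsIntegrallyClosed.isIntegral_iff.mp hint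
    have hn' : (q : ℚ) * n = (b : ℚ) * p := by
      have hnx : (n : ℚ) = ((b : ℚ) * p) / q := hn
      field_simp at hnx
      linarith [hnx]
    have hnz : q * n = b * p := by exact_mod_cast hn'
    have hodd : Odd (b * p) := hb.mul hp
    have heven : Even (q * n) := hq.mul_right n
    rw [hnz] at heven
    exact (Int.not_odd_iff_even.mpr heven) hodd
  -- transfer to ℝ
  have hdetR : (genAdj G ((a : ℝ) / b) - ((p : ℝ) / q) • (1 : Matrix V V ℝ)).det ≠ 0 := by
    have hcast : (Nq.map ((↑) : ℚ → ℝ)).det = ((Nq.det : ℚ) : ℝ) := by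
      have h := RingHom.map_det (algebraMap ℚ ℝ) Nq
      rw [RingHom.mapMatrix_apply] at h
      exact h.symm
    rw [hmap, hcast]
    exact_mod_cast Rat.cast_ne_zero.mpr hdetq
  -- conclude: the kernel is trivial
  rw [multR]
  have hker : LinearMap.ker (genAdj G ((a : ℝ) / b)
      - ((p : ℝ) / q) • (1 : Matrix V V ℝ)).mulVecLin = ⊥ := by
    rw [LinearMap.ker_eq_bot']
    intro v hv
    by_contra hv0
    exact hdetR (Matrix.exists_mulVec_eq_zero_iff.mp ⟨v, hv0, hv⟩)
  rw [hker]
  exact finrank_bot ℝ _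
end
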